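/- arXiv:1507.03868 — 14 statements merged into one kernel-verified Lean document; each statement's English description precedes it below -/
import Mathlib

section
/- Let Λ ∈ ℝ and let (m, a) ∈ ℝ² with Ξ := 1 + a²Λ/3 > 0. Then both partial-derivative identities hold at (m, a): √Ξ·∂(mΞ^{−3/2})/∂m − (Λa/3)·∂(maΞ^{−2})/∂m = ∂(mΞ^{−2})/∂m, and √Ξ·∂(mΞ^{−3/2})/∂a − (Λa/3)·∂(maΞ^{−2})/∂a = ∂(mΞ^{−2})/∂a. -/
/-- For Kerr–de Sitter parameters `(m, a)` with `Ξ = 1 + a²Λ/3 > 0`, the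
identity `√Ξ dE − (Λa/3) dJ = dM` holds for both partial derivatives, where
`E = mΞ^{-3/2}`, `J = maΞ^{-2}`, `M = mΞ^{-2}` (Proposition 4.3: the Kerr–Schild field
`Ξ ∂_t + (Λa/3) ∂_φ` is Hamiltonian with Hamiltonian `M`). -/
theorem kerr_schild_field_is_hamiltonian (Λ m a : ℝ) (hΞ : 0 < 1 + a ^ 2 * Λ / 3) :
    (Real.sqrt (1 + a ^ 2 * Λ / 3) *
          deriv (fun x : ℝ => x * (1 + a ^ 2 * Λ / 3) ^ (-(3 : ℝ) / 2)) m
        - Λ * a / 3 * deriv (fun x : ℝ => x * a / (1 + a ^ 2 * Λ / 3) ^ 2) m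
      = deriv (fun x : ℝ => x / (1 + a ^ 2 * Λ / 3) ^ 2) m) ∧
    (Real.sqrt (1 + a ^ 2 * Λ / 3) *
          deriv (fun y : ℝ => m * (1 + y ^ 2 * Λ / 3) ^ (-(3 : ℝ) / 2)) a
        - Λ * a / 3 * deriv (fun y : ℝ => m * y / (1 + y ^ 2 * Λ / 3) ^ 2) a
      = deriv (fun y : ℝ => m / (1 + y ^ 2 * Λ / 3) ^ 2) a) := by
  have hne : (1 + a ^ 2 * Λ / 3) ≠ 0 := ne_of_gt hΞ
  have h3ne : (3 + a ^ 2 * Λ) ≠ 0 := by intro h; apply hne; linarith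
  set Ξ : ℝ := 1 + a ^ 2 * Λ / 3 with hΞdef
  have key32 : Real.sqrt Ξ * Ξ ^ (-(3 : ℝ) / 2) = Ξ⁻¹ := by
    rw [Real.sqrt_eq_rpow, ← Real.rpow_add hΞ]
    norm_num [Real.rpow_neg_one]
  have key52 : Real.sqrt Ξ * Ξ ^ (-(3 : ℝ) / 2 - 1) = (Ξ ^ 2)⁻¹ := by
    rw [Real.sqrt_eq_rpow, ← Real.rpow_add hΞ]
    have : (1 : ℝ) / 2 + (-(3 : ℝ) / 2 - 1) = ((-2 : ℤ) : ℝ) := by norm_num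
    rw [this, Real.rpow_intCast, zpow_neg]
    norm_num [zpow_two, sq]
  constructor
  · have h1 : deriv (fun x : ℝ => x * Ξ ^ (-(3 : ℝ) / 2)) m = Ξ ^ (-(3 : ℝ) / 2) := by
      simpa using ((hasDerivAt_id m).mul_const (Ξ ^ (-(3 : ℝ) / 2))).deriv
    have h2 : deriv (fun x : ℝ => x * a / Ξ ^ 2) m = a / Ξ ^ 2 := by
      have he : (fun x : ℝ => x * a / Ξ ^ 2) = fun x : ℝ => x * (a / Ξ ^ 2) := by
        funext x; ring
      rw [he]
      simpa using ((hasDerivAt_id m).mul_const (a / Ξ ^ 2)).deriv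
    have h3 : deriv (fun x : ℝ => x / Ξ ^ 2) m = 1 / Ξ ^ 2 := by
      have he : (fun x : ℝ => x / Ξ ^ 2) = fun x : ℝ => x * (1 / Ξ ^ 2) := by
        funext x; ring
      rw [he]
      simpa using ((hasDerivAt_id m).mul_const (1 / Ξ ^ 2)).deriv
    rw [h1, h2, h3, key32]
    rw [hΞdef]
    field_simp [h3ne]
    ring
  · have hb : HasDerivAt (fun y : ℝ => 1 + y ^ 2 * Λ / 3) (2 * a * Λ / 3) a := by
      have := (((hasDerivAt_pow 2 a).mul_const Λ).div_const 3).const_add 1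
      refine this.congr_deriv ?_
      norm_num
    have hE : deriv (fun y : ℝ => m * (1 + y ^ 2 * Λ / 3) ^ (-(3 : ℝ) / 2)) a
        = m * (2 * a * Λ / 3 * (-(3 : ℝ) / 2) * Ξ ^ (-(3 : ℝ) / 2 - 1)) := by
      exact ((hb.rpow_const (Or.inl hne)).const_mul m).deriv
    have hd2 : HasDerivAt (fun y : ℝ => (1 + y ^ 2 * Λ / 3) ^ 2)
        ((2 : ℕ) * Ξ ^ 1 * (2 * a * Λ / 3)) a := hb.pow 2
    have hJ : deriv (fun y : ℝ => m * y / (1 + y ^ 2 * Λ / 3) ^ 2) a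
        = (m * 1 * Ξ ^ 2 - m * a * ((2 : ℕ) * Ξ ^ 1 * (2 * a * Λ / 3))) / (Ξ ^ 2) ^ 2 := by
      exact (((hasDerivAt_id a).const_mul m).div hd2 (pow_ne_zero 2 hne)).deriv
    have hM : deriv (fun y : ℝ => m / (1 + y ^ 2 * Λ / 3) ^ 2) a
        = (0 * Ξ ^ 2 - m * ((2 : ℕ) * Ξ ^ 1 * (2 * a * Λ / 3))) / (Ξ ^ 2) ^ 2 := by
      exact ((hasDerivAt_const a m).div hd2 (pow_ne_zero 2 hne)).deriv
    rw [hE, hJ, hM]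
    have hre : Real.sqrt Ξ * (m * (2 * a * Λ / 3 * (-(3 : ℝ) / 2) * Ξ ^ (-(3 : ℝ) / 2 - 1)))
        = m * (-(3 : ℝ) / 2 * (2 * a * Λ / 3)) * (Ξ ^ 2)⁻¹ := by
      rw [← key52]; ring
    rw [hre]
    rw [hΞdef]
    field_simp [h3ne]
    ring
end

section
/- Let Λ ∈ ℝ and let (m, a) ∈ ℝ² with Ξ := 1 + a²Λ/3 > 0. Then both partial-derivative identities hold at (m, a): Ξ^{−1/2}·∂(mΞ^{−3/2})/∂m − (Λa/(3Ξ))·∂(maΞ^{−2})/∂m = Ξ^{−1}·∂(mΞ^{−2})/∂m, and Ξ^{−1/2}·∂(mΞ^{−3/2})/∂a − (Λa/(3Ξ))·∂(maΞ^{−2})/∂a = Ξ^{−1}·∂(mΞ^{−2})/∂a. -/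
/-- For Kerr–de Sitter parameters `(m, a)` with `Ξ = 1 + a²Λ/3 > 0`, the
identity `Ξ^{-1/2} dE − (Λa/(3Ξ)) dJ = Ξ^{-1} dM` holds for both partial derivatives, where
`E = mΞ^{-3/2}`, `J = maΞ^{-2}`, `M = mΞ^{-2}` (equation (27IX13.12) for the
Henneaux–Teitelboim vector field `X_HT = ∂_t + (Λa/(3Ξ)) ∂_φ`). -/
theorem henneaux_teitelboim_boundary_one_form (Λ m a : ℝ) (hΞ : 0 < 1 + a ^ 2 * Λ / 3) :
    ((1 + a ^ 2 * Λ / 3) ^ (-(1 : ℝ) / 2) *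
          deriv (fun x : ℝ => x * (1 + a ^ 2 * Λ / 3) ^ (-(3 : ℝ) / 2)) m
        - Λ * a / (3 * (1 + a ^ 2 * Λ / 3)) *
          deriv (fun x : ℝ => x * a / (1 + a ^ 2 * Λ / 3) ^ 2) m
      = (1 + a ^ 2 * Λ / 3)⁻¹ * deriv (fun x : ℝ => x / (1 + a ^ 2 * Λ / 3) ^ 2) m) ∧
    ((1 + a ^ 2 * Λ / 3) ^ (-(1 : ℝ) / 2) *
          deriv (fun y : ℝ => m * (1 + y ^ 2 * Λ / 3) ^ (-(3 : ℝ) / 2)) a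
        - Λ * a / (3 * (1 + a ^ 2 * Λ / 3)) *
          deriv (fun y : ℝ => m * y / (1 + y ^ 2 * Λ / 3) ^ 2) a
      = (1 + a ^ 2 * Λ / 3)⁻¹ * deriv (fun y : ℝ => m / (1 + y ^ 2 * Λ / 3) ^ 2) a) := by
  set Ξ : ℝ := 1 + a ^ 2 * Λ / 3 with hΞdef
  have hne : Ξ ≠ 0 := ne_of_gt hΞ
  have hf : ∀ y : ℝ, HasDerivAt (fun y : ℝ => 1 + y ^ 2 * Λ / 3) (2 * y * Λ / 3) y := by
    intro y
    have := (((hasDerivAt_pow 2 y).mul_const Λ).div_const 3).const_add 1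
    simpa [mul_comm, mul_assoc, mul_left_comm] using this
  constructor
  · rw [deriv_mul_const differentiable_id.differentiableAt,
        show (fun x : ℝ => x * a / Ξ ^ 2) = fun x : ℝ => x * (a / Ξ ^ 2) by
          funext x; ring,
        deriv_mul_const differentiable_id.differentiableAt,
        deriv_div_const, deriv_id'']
    have h1 : Ξ ^ (-(1 : ℝ) / 2) * Ξ ^ (-(3 : ℝ) / 2) = (Ξ ^ 2)⁻¹ := by
      rw [← Real.rpow_natCast Ξ 2, ← Real.rpow_neg hΞ.le, ← Real.rpow_add hΞ]
      norm_num
    rw [one_mul, h1]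
    have ha2 : a^2*Λ/3 = Ξ - 1 := by rw [hΞdef]; ring
    clear_value Ξ
    field_simp [hne]
    linear_combination (-3) * ha2
  · have hE : deriv (fun y : ℝ => m * (1 + y ^ 2 * Λ / 3) ^ (-(3 : ℝ) / 2)) a
        = m * (2 * a * Λ / 3 * (-(3 : ℝ) / 2) * Ξ ^ (-(3 : ℝ) / 2 - 1)) :=
      (((hf a).rpow_const (Or.inl hne)).const_mul m).deriv
    have hJ : deriv (fun y : ℝ => m * y / (1 + y ^ 2 * Λ / 3) ^ 2) a
        = (m * Ξ ^ 2 - 4 * m * a ^ 2 * Λ / 3 * Ξ) / Ξ ^ 4 := by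
      have h := (((hasDerivAt_id a).const_mul m).div ((hf a).pow 2) (pow_ne_zero 2 hne))
      simp only [id] at h
      rw [show (fun y : ℝ => m * y / (1 + y ^ 2 * Λ / 3) ^ 2) = (fun y : ℝ => m * y) / (fun y : ℝ => 1 + y ^ 2 * Λ / 3) ^ 2 from rfl, h.deriv]
      simp only [Pi.pow_apply]; push_cast; ring
    have hM : deriv (fun y : ℝ => m / (1 + y ^ 2 * Λ / 3) ^ 2) a
        = (- (4 * m * a * Λ / 3) * Ξ) / Ξ ^ 4 := by
      have h := ((hasDerivAt_const a m).div ((hf a).pow 2) (pow_ne_zero 2 hne))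
      rw [show (fun y : ℝ => m / (1 + y ^ 2 * Λ / 3) ^ 2) = (fun _ : ℝ => m) / (fun y : ℝ => 1 + y ^ 2 * Λ / 3) ^ 2 from rfl, h.deriv]
      simp only [Pi.pow_apply]; push_cast; ring
    rw [hE, hJ, hM]
    have h2 : Ξ ^ (-(1 : ℝ) / 2) * Ξ ^ (-(3 : ℝ) / 2 - 1) = (Ξ ^ 3)⁻¹ := by
      rw [← Real.rpow_natCast Ξ 3, ← Real.rpow_neg hΞ.le, ← Real.rpow_add hΞ]
      norm_num
    have key : Ξ ^ (-(1 : ℝ) / 2) * (m * (2 * a * Λ / 3 * (-(3 : ℝ) / 2) * Ξ ^ (-(3 : ℝ) / 2 - 1)))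
        = m * (2 * a * Λ / 3) * (-(3 : ℝ) / 2) * (Ξ ^ 3)⁻¹ := by
      rw [← h2]; ring
    rw [show Ξ ^ (-(1 : ℝ) / 2) * (m * (2 * a * Λ / 3 * (-(3 : ℝ) / 2) * Ξ ^ (-(3 : ℝ) / 2 - 1)))
        = m * (2 * a * Λ / 3) * (-(3 : ℝ) / 2) * (Ξ ^ 3)⁻¹ from key]
    have ha2 : a^2*Λ/3 = Ξ - 1 := by rw [hΞdef]; ring
    clear_value Ξ
    field_simp [hne]
    linear_combination (12*m*a*Λ) * ha2
end

section
/- Let Λ ∈ ℝ with Λ ≠ 0, and let U ⊆ {(m, a) ∈ ℝ² : 1 + a²Λ/3 > 0 and a ≠ 0} be a nonempty open set. Then there is no differentiable function H : U → ℝ satisfying, throughout U, ∂H/∂m = Ξ^{−3} and ∂H/∂a = −(4maΛ/3)·Ξ^{−4}, where Ξ = 1 + a²Λ/3. -/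
/-- For `Λ ≠ 0` and any nonempty open subset `U` of
`{(m, a) : 1 + a²Λ/3 > 0 ∧ a ≠ 0}`, there is no differentiable `H : U → ℝ` with
`∂H/∂m = Ξ⁻³` and `∂H/∂a = −(4maΛ/3)Ξ⁻⁴` on `U` (the Henneaux–Teitelboim field `X_HT`
is not Hamiltonian). -/
theorem henneaux_teitelboim_not_hamiltonian (Λ : ℝ) (hΛ : Λ ≠ 0)
    (U : Set (ℝ × ℝ))
    (hsub : U ⊆ {p : ℝ × ℝ | 0 < 1 + p.2 ^ 2 * Λ / 3 ∧ p.2 ≠ 0})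
    (hopen : IsOpen U) (hne : U.Nonempty) :
    ¬ ∃ H : ℝ × ℝ → ℝ, DifferentiableOn ℝ H U ∧
        ∀ p ∈ U,
          fderiv ℝ H p (1, 0) = ((1 + p.2 ^ 2 * Λ / 3) ^ 3)⁻¹ ∧
          fderiv ℝ H p (0, 1) =
            -(4 * p.1 * p.2 * Λ / 3) * ((1 + p.2 ^ 2 * Λ / 3) ^ 4)⁻¹ := by
  rintro ⟨H, hdiff, hpart⟩
  obtain ⟨p₀, hp₀⟩ := hne
  obtain ⟨hΞpos, ha⟩ := hsub hp₀
  have hΞ0 : (1 + p₀.2 ^ 2 * Λ / 3) ≠ 0 := ne_of_gt hΞpos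
  set L1 : ℝ × ℝ →L[ℝ] ℝ := ContinuousLinearMap.fst ℝ ℝ ℝ with hL1
  set L2 : ℝ × ℝ →L[ℝ] ℝ := ContinuousLinearMap.snd ℝ ℝ ℝ with hL2
  set A : ℝ × ℝ → ℝ := fun p => ((1 + p.2 ^ 2 * Λ / 3) ^ 3)⁻¹ with hA_def
  set B : ℝ × ℝ → ℝ := fun p =>
    -(4 * p.1 * p.2 * Λ / 3) * ((1 + p.2 ^ 2 * Λ / 3) ^ 4)⁻¹ with hB_def
  set φ : ℝ × ℝ → (ℝ × ℝ →L[ℝ] ℝ) := fun p => A p • L1 + B p • L2 with hφ_def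
  -- fderiv of H equals φ on U
  have hfd : ∀ p ∈ U, HasFDerivAt H (φ p) p := by
    intro p hp
    have hd : DifferentiableAt ℝ H p := (hdiff p hp).differentiableAt (hopen.mem_nhds hp)
    have heq : fderiv ℝ H p = φ p := by
      apply ContinuousLinearMap.ext
      intro v
      have hv : v = v.1 • ((1:ℝ), (0:ℝ)) + v.2 • ((0:ℝ), (1:ℝ)) := by
        simp [Prod.ext_iff]
      rw [hv]
      simp only [map_add, map_smul, (hpart p hp).1, (hpart p hp).2, smul_eq_mul]
      simp [hφ_def, hA_def, hB_def, hL1, hL2]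
    rw [← heq]; exact hd.hasFDerivAt
  -- derivative of the base function Ξ
  have hsnd : HasFDerivAt (fun p : ℝ × ℝ => p.2) L2 p₀ := hasFDerivAt_snd
  have hfst : HasFDerivAt (fun p : ℝ × ℝ => p.1) L1 p₀ := hasFDerivAt_fst
  have hsq := (hasDerivAt_pow 2 p₀.2).comp_hasFDerivAt p₀ hsnd
  have hΞ : HasFDerivAt (fun p : ℝ × ℝ => 1 + p.2 ^ 2 * Λ / 3) _ p₀ :=
    (((hsq.mul_const Λ).mul_const 3⁻¹).const_add 1).congr_of_eventuallyEq
      (Filter.Eventually.of_forall fun p => by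
        simp only [Function.comp_apply]; ring)
  have hA' : HasFDerivAt A _ p₀ :=
    ((((hasDerivAt_pow 3 (1 + p₀.2 ^ 2 * Λ / 3)).inv
        (by exact pow_ne_zero 3 hΞ0)).comp_hasFDerivAt p₀ hΞ)).congr_of_eventuallyEq
      (Filter.Eventually.of_forall fun p => by
        simp only [hA_def, Function.comp_apply, Pi.inv_apply])
  have hB' : HasFDerivAt B _ p₀ :=
    (((((hfst.mul hsnd).const_mul 4).mul_const Λ).mul_const 3⁻¹).neg.mul
        (((hasDerivAt_pow 4 (1 + p₀.2 ^ 2 * Λ / 3)).inv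
          (by exact pow_ne_zero 4 hΞ0)).comp_hasFDerivAt p₀ hΞ)).congr_of_eventuallyEq
      (Filter.Eventually.of_forall fun p => by
        simp only [hB_def, Function.comp_apply, Pi.mul_apply, Pi.neg_apply, Pi.inv_apply]; ring)
  have hφ' := (hA'.smul_const L1).add (hB'.smul_const L2)
  simp only [Pi.add_def] at hφ'
  rw [← hφ_def] at hφ'
  have hsym := second_derivative_symmetric_of_eventually
      (Filter.eventually_of_mem (hopen.mem_nhds hp₀) hfd) hφ'
      ((1:ℝ), (0:ℝ)) ((0:ℝ), (1:ℝ))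
  simp [hL1, hL2, ContinuousLinearMap.smulRight_apply] at hsym
  set c := 1 + p₀.2 ^ 2 * Λ / 3 with hc_def
  field_simp [hΞ0] at hsym
  have h6 : c ^ 6 ≠ 0 := pow_ne_zero 6 hΞ0
  have hzero : Λ * p₀.2 * c ^ 6 = 0 := by ring_nf at hsym ⊢; linarith
  exact mul_ne_zero (mul_ne_zero hΛ ha) h6 hzero
end

section
/- Let Λ ∈ ℝ with Λ ≠ 0, and let U ⊆ {(m, a) ∈ ℝ² : 1 + a²Λ/3 > 0 and a ≠ 0} be a nonempty open set. Then there is no differentiable function H : U → ℝ satisfying, throughout U, ∂H/∂m = Ξ^{−2} and ∂H/∂a = −maΛ·Ξ^{−3}, where Ξ = 1 + a²Λ/3. -/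
set_option maxHeartbeats 1000000


/-- For `Λ ≠ 0` and any nonempty open subset `U` of
`{(m, a) : 1 + a²Λ/3 > 0 ∧ a ≠ 0}`, there is no differentiable `H : U → ℝ` with
`∂H/∂m = Ξ⁻²` and `∂H/∂a = −maΛΞ⁻³` on `U` (the Boyer–Lindquist field `∂_t` is not
associated with a Hamiltonian flow). -/
theorem boyer_lindquist_dt_not_hamiltonian (Λ : ℝ) (hΛ : Λ ≠ 0)
    (U : Set (ℝ × ℝ))
    (hsub : U ⊆ {p : ℝ × ℝ | 0 < 1 + p.2 ^ 2 * Λ / 3 ∧ p.2 ≠ 0})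
    (hopen : IsOpen U) (hne : U.Nonempty) :
    ¬ ∃ H : ℝ × ℝ → ℝ, DifferentiableOn ℝ H U ∧
        ∀ p ∈ U,
          fderiv ℝ H p (1, 0) = ((1 + p.2 ^ 2 * Λ / 3) ^ 2)⁻¹ ∧
          fderiv ℝ H p (0, 1) =
            -(p.1 * p.2 * Λ) * ((1 + p.2 ^ 2 * Λ / 3) ^ 3)⁻¹ := by
  rintro ⟨H, hdiff, hpd⟩
  obtain ⟨p₀, hp₀⟩ := hne
  obtain ⟨hqpos, ha⟩ := hsub hp₀
  set fst' : ℝ × ℝ →L[ℝ] ℝ := ContinuousLinearMap.fst ℝ ℝ ℝ with hfst'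
  set snd' : ℝ × ℝ →L[ℝ] ℝ := ContinuousLinearMap.snd ℝ ℝ ℝ with hsnd'
  set f1 : ℝ × ℝ → ℝ := fun p => ((1 + p.2 ^ 2 * Λ / 3) ^ 2)⁻¹ with hf1def
  set f2 : ℝ × ℝ → ℝ := fun p => -(p.1 * p.2 * Λ) * ((1 + p.2 ^ 2 * Λ / 3) ^ 3)⁻¹ with hf2def
  set q : ℝ := 1 + p₀.2 ^ 2 * Λ / 3 with hqdef
  have hqne : q ≠ 0 := ne_of_gt hqpos
  have hE : (1 + p₀.2 * p₀.2 * (Λ / 3)) = q := by rw [hqdef]; ring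
  clear_value q
  have hqne' : (1 + p₀.2 * p₀.2 * (Λ / 3)) ≠ 0 := by rw [hE]; exact hqne
  have hq : HasFDerivAt (fun p : ℝ × ℝ => 1 + p.2 * p.2 * (Λ / 3))
      ((Λ / 3) • (p₀.2 • snd' + p₀.2 • snd')) p₀ :=
    ((hasFDerivAt_snd.mul hasFDerivAt_snd).mul_const (Λ / 3)).const_add 1
  -- derivative of f1
  obtain ⟨D1, hf1, hD1⟩ : ∃ D : ℝ × ℝ →L[ℝ] ℝ, HasFDerivAt f1 D p₀ ∧
      D (0, 1) = -(4 * p₀.2 * Λ / 3) * (q ^ 3)⁻¹ := by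
    have hne2 : (1 + p₀.2 * p₀.2 * (Λ / 3)) * (1 + p₀.2 * p₀.2 * (Λ / 3)) ≠ 0 :=
      mul_ne_zero hqne' hqne'
    have h : HasFDerivAt
        (fun p : ℝ × ℝ => ((1 + p.2 * p.2 * (Λ / 3)) * (1 + p.2 * p.2 * (Λ / 3)))⁻¹)
        _ p₀ := (hasFDerivAt_inv hne2).comp p₀ (hq.mul hq)
    have heq : (fun p : ℝ × ℝ =>
        ((1 + p.2 * p.2 * (Λ / 3)) * (1 + p.2 * p.2 * (Λ / 3)))⁻¹) = f1 := by
      funext p; rw [hf1def]; congr 1; ring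
    rw [heq] at h
    refine ⟨_, h, ?_⟩
    simp only [ContinuousLinearMap.coe_comp', Function.comp_apply,
      ContinuousLinearMap.smulRight_apply, ContinuousLinearMap.one_apply,
      ContinuousLinearMap.add_apply, ContinuousLinearMap.smul_apply, hsnd',
      ContinuousLinearMap.coe_snd', smul_eq_mul, ContinuousLinearMap.toSpanSingleton_apply]
    rw [hE]
    field_simp [hqne]
    ring
  -- derivative of f2
  obtain ⟨D2, hf2, hD2⟩ : ∃ D : ℝ × ℝ →L[ℝ] ℝ, HasFDerivAt f2 D p₀ ∧
      D (1, 0) = -(p₀.2 * Λ) * (q ^ 3)⁻¹ := by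
    have hne3 : (1 + p₀.2 * p₀.2 * (Λ / 3)) *
        ((1 + p₀.2 * p₀.2 * (Λ / 3)) * (1 + p₀.2 * p₀.2 * (Λ / 3))) ≠ 0 :=
      mul_ne_zero hqne' (mul_ne_zero hqne' hqne')
    have hfst1 : HasFDerivAt (fun p : ℝ × ℝ => p.1) fst' p₀ := hasFDerivAt_fst
    have hsnd1 : HasFDerivAt (fun p : ℝ × ℝ => p.2) snd' p₀ := hasFDerivAt_snd
    have hnum := ((hfst1.mul hsnd1).mul_const Λ).neg
    have hq3 : HasFDerivAt
        (fun p : ℝ × ℝ => ((1 + p.2 * p.2 * (Λ / 3)) *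
          ((1 + p.2 * p.2 * (Λ / 3)) * (1 + p.2 * p.2 * (Λ / 3))))⁻¹)
        _ p₀ := (hasFDerivAt_inv hne3).comp p₀ (hq.mul (hq.mul hq))
    have h : HasFDerivAt (fun p : ℝ × ℝ => -(p.1 * p.2 * Λ) *
        ((1 + p.2 * p.2 * (Λ / 3)) * ((1 + p.2 * p.2 * (Λ / 3)) * (1 + p.2 * p.2 * (Λ / 3))))⁻¹) _ p₀ :=
      hnum.mul hq3
    have heq : (fun p : ℝ × ℝ => -(p.1 * p.2 * Λ) *
        ((1 + p.2 * p.2 * (Λ / 3)) * ((1 + p.2 * p.2 * (Λ / 3)) * (1 + p.2 * p.2 * (Λ / 3))))⁻¹) = f2 := by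
      funext p; rw [hf2def]; congr 1; ring
    rw [heq] at h
    refine ⟨_, h, ?_⟩
    simp only [ContinuousLinearMap.coe_comp', Function.comp_apply,
      ContinuousLinearMap.smulRight_apply, ContinuousLinearMap.one_apply,
      ContinuousLinearMap.add_apply, ContinuousLinearMap.smul_apply,
      ContinuousLinearMap.neg_apply, hsnd', hfst', ContinuousLinearMap.coe_snd',
      ContinuousLinearMap.coe_fst', smul_eq_mul, ContinuousLinearMap.toSpanSingleton_apply,
      Pi.neg_apply, Pi.mul_apply]
    rw [hE]
    field_simp [hqne]
    ring
  -- g and its derivative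
  set g : ℝ × ℝ → (ℝ × ℝ →L[ℝ] ℝ) := fun p => f1 p • fst' + f2 p • snd' with hgdef
  have hg : HasFDerivAt g (ContinuousLinearMap.smulRight D1 fst' + ContinuousLinearMap.smulRight D2 snd') p₀ :=
    (hf1.smul_const fst').add (hf2.smul_const snd')
  have hev : ∀ᶠ p in nhds p₀, HasFDerivAt H (g p) p := by
    filter_upwards [hopen.mem_nhds hp₀] with p hp
    have hd := (hdiff.differentiableAt (hopen.mem_nhds hp)).hasFDerivAt
    have heq : fderiv ℝ H p = g p := by
      obtain ⟨e1, e2⟩ := hpd p hp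
      apply ContinuousLinearMap.ext
      intro v
      have hv : v = v.1 • ((1 : ℝ), (0 : ℝ)) + v.2 • ((0 : ℝ), (1 : ℝ)) := by
        simp [Prod.ext_iff]
      rw [hv, map_add, map_smul, map_smul, e1, e2, map_add, map_smul, map_smul]
      simp [hgdef, hf1def, hf2def, hfst', hsnd']
    rw [← heq]; exact hd
  have symm := second_derivative_symmetric_of_eventually hev hg ((1:ℝ), (0:ℝ)) ((0:ℝ), (1:ℝ))
  simp only [ContinuousLinearMap.add_apply, ContinuousLinearMap.smulRight_apply, hfst', hsnd',
    ContinuousLinearMap.coe_fst', ContinuousLinearMap.coe_snd', smul_eq_mul] at symm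
  norm_num at symm
  rw [hD1, hD2] at symm
  have hinv : (q ^ 3)⁻¹ ≠ 0 := inv_ne_zero (pow_ne_zero 3 hqne)
  have haΛ : p₀.2 * Λ ≠ 0 := mul_ne_zero ha hΛ
  have h2 : (p₀.2 * Λ / 3) * (q ^ 3)⁻¹ = 0 := by linarith [symm]
  rcases mul_eq_zero.1 h2 with h | h
  · exact haΛ (by linarith)
  · exact hinv h
end

section
/- Let Λ ∈ ℝ and let m, a, r : (−1, 1) → ℝ be differentiable functions such that for every s: Δ_r(r(s)) = 0 (with parameters m(s), a(s)), Ξ(s) := 1 + a(s)²Λ/3 > 0, and r(s)² + a(s)² > 0. Set Ω := a(1 − Λr²/3)/(r² + a²), κ := Δ_r′(r)/(2(r² + a²)), A := 4π(r² + a²)/Ξ, M := mΞ^{−2}, J := maΞ^{−2}. Then for every s: (d/ds)M = (κ/(8π))·(d/ds)A + Ω·(d/ds)J. -/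
set_option maxHeartbeats 1000000


/-- The Kerr–de Sitter horizon polynomial `Δ_r = (r² + a²)(1 − Λr²/3) − 2mr`. -/
noncomputable def Δr (Λ m a r : ℝ) : ℝ := (r ^ 2 + a ^ 2) * (1 - Λ / 3 * r ^ 2) - 2 * m * r

/-- The derivative `Δ_r′ = 2r(1 − Λr²/3) − (2Λr/3)(r² + a²) − 2m` of `Δ_r` in `r`. -/
noncomputable def Δr' (Λ m a r : ℝ) : ℝ :=
  2 * r * (1 - Λ / 3 * r ^ 2) - 2 * Λ * r / 3 * (r ^ 2 + a ^ 2) - 2 * m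

/-- First law of Kerr–de Sitter black hole thermodynamics: along a
differentiable family of horizon data (`Δ_r(r) = 0`, `Ξ > 0`, `r² + a² > 0`) one has
`dM/ds = (κ/(8π)) dA/ds + Ω dJ/ds`, with `Ω = a(1 − Λr²/3)/(r² + a²)`,
`κ = Δ_r′/(2(r² + a²))`, `A = 4π(r² + a²)/Ξ`, `M = mΞ⁻²`, `J = maΞ⁻²`. -/
theorem first_law_kds (Λ : ℝ) (m a r : ℝ → ℝ)
    (hm : ∀ s ∈ Set.Ioo (-1 : ℝ) 1, DifferentiableAt ℝ m s)
    (ha : ∀ s ∈ Set.Ioo (-1 : ℝ) 1, DifferentiableAt ℝ a s)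
    (hr : ∀ s ∈ Set.Ioo (-1 : ℝ) 1, DifferentiableAt ℝ r s)
    (hΔ : ∀ s ∈ Set.Ioo (-1 : ℝ) 1, Δr Λ (m s) (a s) (r s) = 0)
    (hΞ : ∀ s ∈ Set.Ioo (-1 : ℝ) 1, 0 < 1 + (a s) ^ 2 * Λ / 3)
    (hra : ∀ s ∈ Set.Ioo (-1 : ℝ) 1, 0 < (r s) ^ 2 + (a s) ^ 2) :
    ∀ s ∈ Set.Ioo (-1 : ℝ) 1,
      deriv (fun t => m t / (1 + (a t) ^ 2 * Λ / 3) ^ 2) s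
      = (Δr' Λ (m s) (a s) (r s) / (2 * ((r s) ^ 2 + (a s) ^ 2))) / (8 * Real.pi) *
          deriv (fun t => 4 * Real.pi * ((r t) ^ 2 + (a t) ^ 2) / (1 + (a t) ^ 2 * Λ / 3)) s
        + a s * (1 - Λ / 3 * (r s) ^ 2) / ((r s) ^ 2 + (a s) ^ 2) *
          deriv (fun t => m t * a t / (1 + (a t) ^ 2 * Λ / 3) ^ 2) s := by
  intro s hs
  have hm' : HasDerivAt m (deriv m s) s := (hm s hs).hasDerivAt
  have ha' : HasDerivAt a (deriv a s) s := (ha s hs).hasDerivAt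
  have hr' : HasDerivAt r (deriv r s) s := (hr s hs).hasDerivAt
  set m' := deriv m s
  set a' := deriv a s
  set r' := deriv r s
  have hΞ0 : (1 + (a s) ^ 2 * Λ / 3) ≠ 0 := ne_of_gt (hΞ s hs)
  have hP0 : ((r s) ^ 2 + (a s) ^ 2) ≠ 0 := ne_of_gt (hra s hs)
  have hπ : Real.pi ≠ 0 := Real.pi_ne_zero
  -- Ξ
  have hg : HasDerivAt (fun t => 1 + (a t) ^ 2 * Λ / 3) (2 * a s * a' * Λ / 3) s := by
    have := (((ha'.pow 2).mul_const Λ).div_const 3).const_add 1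
    refine this.congr_deriv ?_
    ring
  -- P
  have hP : HasDerivAt (fun t => (r t) ^ 2 + (a t) ^ 2) (2 * r s * r' + 2 * a s * a') s := by
    have := (hr'.pow 2).add (ha'.pow 2)
    refine this.congr_deriv ?_
    ring
  -- q
  have hq : HasDerivAt (fun t => 1 - Λ / 3 * (r t) ^ 2) (-(Λ / 3 * (2 * r s * r'))) s := by
    have := ((hr'.pow 2).const_mul (Λ / 3)).const_sub 1
    refine this.congr_deriv ?_
    ring
  -- M
  have hM : HasDerivAt (fun t => m t / (1 + (a t) ^ 2 * Λ / 3) ^ 2)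
      ((m' * (1 + (a s) ^ 2 * Λ / 3) ^ 2 -
        m s * (2 * (1 + (a s) ^ 2 * Λ / 3) * (2 * a s * a' * Λ / 3))) /
        ((1 + (a s) ^ 2 * Λ / 3) ^ 2) ^ 2) s := by
    have := hm'.div (hg.pow 2) (pow_ne_zero 2 hΞ0)
    refine this.congr_deriv ?_
    simp only [Pi.pow_apply]
    ring
  -- A
  have hA : HasDerivAt (fun t => 4 * Real.pi * ((r t) ^ 2 + (a t) ^ 2) / (1 + (a t) ^ 2 * Λ / 3))
      ((4 * Real.pi * (2 * r s * r' + 2 * a s * a') * (1 + (a s) ^ 2 * Λ / 3) -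
        4 * Real.pi * ((r s) ^ 2 + (a s) ^ 2) * (2 * a s * a' * Λ / 3)) /
        (1 + (a s) ^ 2 * Λ / 3) ^ 2) s := by
    have := (hP.const_mul (4 * Real.pi)).div hg hΞ0
    exact this
  -- J
  have hJ : HasDerivAt (fun t => m t * a t / (1 + (a t) ^ 2 * Λ / 3) ^ 2)
      (((m' * a s + m s * a') * (1 + (a s) ^ 2 * Λ / 3) ^ 2 -
        m s * a s * (2 * (1 + (a s) ^ 2 * Λ / 3) * (2 * a s * a' * Λ / 3))) /
        ((1 + (a s) ^ 2 * Λ / 3) ^ 2) ^ 2) s := by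
    have := (hm'.mul ha').div (hg.pow 2) (pow_ne_zero 2 hΞ0)
    refine this.congr_deriv ?_
    simp only [Pi.pow_apply, Pi.mul_apply]
    ring
  -- constraint function
  have hF : HasDerivAt (fun t => Δr Λ (m t) (a t) (r t))
      ((2 * r s * r' + 2 * a s * a') * (1 - Λ / 3 * (r s) ^ 2) +
        ((r s) ^ 2 + (a s) ^ 2) * (-(Λ / 3 * (2 * r s * r'))) -
        (2 * m' * r s + 2 * m s * r')) s := by
    unfold Δr
    have := (hP.mul hq).sub ((hm'.const_mul 2).mul hr')
    exact this
  have hE2 : (2 * r s * r' + 2 * a s * a') * (1 - Λ / 3 * (r s) ^ 2) +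
        ((r s) ^ 2 + (a s) ^ 2) * (-(Λ / 3 * (2 * r s * r'))) -
        (2 * m' * r s + 2 * m s * r') = 0 := by
    have hev : (fun t => Δr Λ (m t) (a t) (r t)) =ᶠ[nhds s] (fun _ => (0 : ℝ)) :=
      Filter.eventuallyEq_of_mem (isOpen_Ioo.mem_nhds hs) hΔ
    rw [← hF.deriv, hev.deriv_eq, deriv_const]
  have hC1 : ((r s) ^ 2 + (a s) ^ 2) * (1 - Λ / 3 * (r s) ^ 2) - 2 * m s * r s = 0 :=
    hΔ s hs
  rw [hM.deriv, hA.deriv, hJ.deriv]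
  unfold Δr'
  have h3 : (3 + (a s) ^ 2 * Λ) ≠ 0 := by
    intro h; exact hΞ0 (by linarith)
  field_simp
  linear_combination
    (48 * Λ * r s * a s * a' * (3 + (a s) ^ 2 * Λ)) * hC1
    - (12 * r s * (3 + (a s) ^ 2 * Λ) ^ 2) * hE2
end

section
/- Let Λ ∈ ℝ and let m, a, r : (−1, 1) → ℝ be differentiable functions such that for every s: Δ_r(r(s)) = 0 (with parameters m(s), a(s)), Ξ(s) := 1 + a(s)²Λ/3 > 0, r(s)² + a(s)² > 0, and κ(s) := Δ_r′(r)/(2(r² + a²)) ≠ 0. Set Ω := a(1 − Λr²/3)/(r² + a²), M := mΞ^{−2}, J := maΞ^{−2}. Then for every s: (d/ds)((r² + a²)/(2Ξ)) = κ^{−1}·((d/ds)M − Ω·(d/ds)J). -/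
set_option maxHeartbeats 1000000 in
/-- The core algebraic identity behind Statement 8, with the values and derivatives of the
family abstracted into real variables. -/
theorem usgh_aux (L A R ap rp M MP : ℝ) (hR : R ≠ 0) (hX : R^2 + A^2 ≠ 0)
    (hXi : (1 + A^2*L/3) ≠ 0)
    (hD : Δr' L M A R ≠ 0)
    (hΔc : (R^2+A^2)*(1-L/3*R^2) - 2*M*R = 0)
    (key : (2*R*rp + 2*A*ap)*(1-L/3*R^2) + (R^2+A^2)*(-(L/3*(2*R*rp))) - (2*MP*R + 2*M*rp) = 0) :
    ((2*R*rp + 2*A*ap) * (2*(1+A^2*L/3)) - (R^2+A^2)*(2*(2*A*ap*L/3))) / (2*(1+A^2*L/3))^2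
    = (Δr' L M A R / (2*(R^2+A^2)))⁻¹ *
      ((MP * (1+A^2*L/3)^2 - M * (2*(1+A^2*L/3)*(2*A*ap*L/3))) / ((1+A^2*L/3)^2)^2
        - A*(1-L/3*R^2)/(R^2+A^2) *
          (((MP*A + M*ap) * (1+A^2*L/3)^2 - M*A*(2*(1+A^2*L/3)*(2*A*ap*L/3))) / ((1+A^2*L/3)^2)^2)) := by
  simp only [Δr'] at hD ⊢
  have hXi' : (3 + A^2*L) ≠ 0 := fun h =>
    hXi (by rw [show (1 + A^2*L/3) = (3+A^2*L)/3 by ring, h]; norm_num)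
  rw [inv_div, div_mul_eq_mul_div, eq_div_iff hD]
  field_simp [hXi', hX]
  linear_combination (-6*A*ap*L*R*(3+A^2*L)) * hΔc + (3*R*(3+A^2*L)^2/2) * key

/-- Along a differentiable family of nondegenerate Kerr–de Sitter horizon
data (`Δ_r(r) = 0`, `Ξ > 0`, `r² + a² > 0`, `κ ≠ 0`), the Killing vector of unit surface
gravity is Hamiltonian with Hamiltonian `A/(8π) = (r² + a²)/(2Ξ)`:
`d((r² + a²)/(2Ξ))/ds = κ⁻¹ (dM/ds − Ω dJ/ds)`. -/
theorem unit_surface_gravity_hamiltonian (Λ : ℝ) (m a r : ℝ → ℝ)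
    (hm : ∀ s ∈ Set.Ioo (-1 : ℝ) 1, DifferentiableAt ℝ m s)
    (ha : ∀ s ∈ Set.Ioo (-1 : ℝ) 1, DifferentiableAt ℝ a s)
    (hr : ∀ s ∈ Set.Ioo (-1 : ℝ) 1, DifferentiableAt ℝ r s)
    (hΔ : ∀ s ∈ Set.Ioo (-1 : ℝ) 1, Δr Λ (m s) (a s) (r s) = 0)
    (hΞ : ∀ s ∈ Set.Ioo (-1 : ℝ) 1, 0 < 1 + (a s) ^ 2 * Λ / 3)
    (hra : ∀ s ∈ Set.Ioo (-1 : ℝ) 1, 0 < (r s) ^ 2 + (a s) ^ 2)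
    (hκ : ∀ s ∈ Set.Ioo (-1 : ℝ) 1,
      Δr' Λ (m s) (a s) (r s) / (2 * ((r s) ^ 2 + (a s) ^ 2)) ≠ 0) :
    ∀ s ∈ Set.Ioo (-1 : ℝ) 1,
      deriv (fun t => ((r t) ^ 2 + (a t) ^ 2) / (2 * (1 + (a t) ^ 2 * Λ / 3))) s
      = (Δr' Λ (m s) (a s) (r s) / (2 * ((r s) ^ 2 + (a s) ^ 2)))⁻¹ *
          (deriv (fun t => m t / (1 + (a t) ^ 2 * Λ / 3) ^ 2) s
            - a s * (1 - Λ / 3 * (r s) ^ 2) / ((r s) ^ 2 + (a s) ^ 2) *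
              deriv (fun t => m t * a t / (1 + (a t) ^ 2 * Λ / 3) ^ 2) s) := by
  intro s hs
  have had := (ha s hs).hasDerivAt
  have hmd := (hm s hs).hasDerivAt
  have hrd := (hr s hs).hasDerivAt
  set a' := deriv a s with ha'
  set m' := deriv m s with hm'
  set r' := deriv r s with hr'
  have hΞs := hΞ s hs
  have hras := hra s hs
  have hΞne : (1 + (a s) ^ 2 * Λ / 3) ≠ 0 := ne_of_gt hΞs
  have hrane : ((r s) ^ 2 + (a s) ^ 2) ≠ 0 := ne_of_gt hras
  have hΔs : Δr Λ (m s) (a s) (r s) = 0 := hΔ s hs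
  have hrne : r s ≠ 0 := by
    intro h0
    have := hΔs
    simp only [Δr, h0] at this
    have ha0 : a s = 0 := by nlinarith
    rw [h0, ha0] at hras
    norm_num at hras
  have hDne : Δr' Λ (m s) (a s) (r s) ≠ 0 := by
    intro h0
    exact hκ s hs (by rw [h0]; simp)
  have hΞd : HasDerivAt (fun t => 1 + (a t) ^ 2 * Λ / 3) (2 * a s * a' * Λ / 3) s := by
    have h := (((had.pow 2).mul_const Λ).div_const 3).const_add 1
    exact h.congr_deriv (by ring)
  have hAd : HasDerivAt (fun t => ((r t) ^ 2 + (a t) ^ 2) / (2 * (1 + (a t) ^ 2 * Λ / 3)))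
      (((2 * r s * r' + 2 * a s * a') * (2 * (1 + (a s) ^ 2 * Λ / 3))
        - ((r s) ^ 2 + (a s) ^ 2) * (2 * (2 * a s * a' * Λ / 3)))
        / (2 * (1 + (a s) ^ 2 * Λ / 3)) ^ 2) s := by
    have hnum : HasDerivAt (fun t => (r t) ^ 2 + (a t) ^ 2) (2 * r s * r' + 2 * a s * a') s := by
      have h := (hrd.pow 2).add (had.pow 2)
      exact h.congr_deriv (by ring)
    exact hnum.div (hΞd.const_mul 2) (by positivity)
  have hden : HasDerivAt (fun t => (1 + (a t) ^ 2 * Λ / 3) ^ 2)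
      (2 * (1 + (a s) ^ 2 * Λ / 3) * (2 * a s * a' * Λ / 3)) s := by
    have h := hΞd.pow 2
    exact h.congr_deriv (by ring)
  have hMd : HasDerivAt (fun t => m t / (1 + (a t) ^ 2 * Λ / 3) ^ 2)
      ((m' * (1 + (a s) ^ 2 * Λ / 3) ^ 2
        - m s * (2 * (1 + (a s) ^ 2 * Λ / 3) * (2 * a s * a' * Λ / 3)))
        / ((1 + (a s) ^ 2 * Λ / 3) ^ 2) ^ 2) s :=
    hmd.div hden (by positivity)
  have hJd : HasDerivAt (fun t => m t * a t / (1 + (a t) ^ 2 * Λ / 3) ^ 2)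
      (((m' * a s + m s * a') * (1 + (a s) ^ 2 * Λ / 3) ^ 2
        - m s * a s * (2 * (1 + (a s) ^ 2 * Λ / 3) * (2 * a s * a' * Λ / 3)))
        / ((1 + (a s) ^ 2 * Λ / 3) ^ 2) ^ 2) s :=
    (hmd.mul had).div hden (by positivity)
  have hFd : HasDerivAt (fun t => Δr Λ (m t) (a t) (r t))
      ((2 * r s * r' + 2 * a s * a') * (1 - Λ / 3 * (r s) ^ 2)
        + ((r s) ^ 2 + (a s) ^ 2) * (-(Λ / 3 * (2 * r s * r')))
        - (2 * m' * r s + 2 * m s * r')) s := by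
    simp only [Δr]
    have h1 : HasDerivAt (fun t => (r t) ^ 2 + (a t) ^ 2) (2 * r s * r' + 2 * a s * a') s := by
      have h := (hrd.pow 2).add (had.pow 2)
      exact h.congr_deriv (by ring)
    have h2 : HasDerivAt (fun t => 1 - Λ / 3 * (r t) ^ 2) (-(Λ / 3 * (2 * r s * r'))) s := by
      have h := ((hrd.pow 2).const_mul (Λ / 3)).const_sub 1
      exact h.congr_deriv (by ring)
    have h3 : HasDerivAt (fun t => 2 * m t * r t) (2 * m' * r s + 2 * m s * r') s := by
      have h := (hmd.const_mul 2).mul hrd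
      exact h.congr_deriv (by ring)
    exact (h1.mul h2).sub h3
  have hF0 : deriv (fun t => Δr Λ (m t) (a t) (r t)) s = 0 := by
    have hev : (fun t => Δr Λ (m t) (a t) (r t)) =ᶠ[nhds s] (fun _ => (0 : ℝ)) :=
      Filter.eventuallyEq_of_mem (isOpen_Ioo.mem_nhds hs) (fun t ht => hΔ t ht)
    rw [hev.deriv_eq, deriv_const]
  have key : (2 * r s * r' + 2 * a s * a') * (1 - Λ / 3 * (r s) ^ 2)
      + ((r s) ^ 2 + (a s) ^ 2) * (-(Λ / 3 * (2 * r s * r')))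
      - (2 * m' * r s + 2 * m s * r') = 0 := by
    rw [← hFd.deriv, hF0]
  have hΔc : ((r s) ^ 2 + (a s) ^ 2) * (1 - Λ / 3 * (r s) ^ 2) - 2 * m s * r s = 0 := by
    simpa [Δr] using hΔs
  rw [hAd.deriv, hMd.deriv, hJd.deriv]
  exact usgh_aux Λ (a s) (r s) a' r' (m s) m' hrne hrane hΞne hDne hΔc key
end

section
/- Let Λ ∈ ℝ and let m, a, r₁, r₂ : (−1, 1) → ℝ be differentiable functions such that for every s and each i ∈ {1, 2}: Δ_r(r_i(s)) = 0 (with parameters m(s), a(s)), Ξ(s) := 1 + a(s)²Λ/3 > 0, r_i(s)² + a(s)² > 0, and κ₁(s) := Δ_r′(r₁)/(2(r₁² + a²)) ≠ 0. Set, for each i, κ_i := Δ_r′(r_i)/(2(r_i² + a²)), Ω_i := a(1 − Λr_i²/3)/(r_i² + a²), A_i := 4π(r_i² + a²)/Ξ, and J := maΞ^{−2}. Then for every s: (d/ds)(A₁/(8π)) = (κ₂/(8πκ₁))·(d/ds)A₂ + ((Ω₂ − Ω₁)/κ₁)·(d/ds)J. -/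
/-- Surface gravity `κ = Δ_r′(r)/(2(r² + a²))` of the horizon `{r}`. -/
noncomputable def κKdS (Λ m a r : ℝ) : ℝ := Δr' Λ m a r / (2 * (r ^ 2 + a ^ 2))

/-- Horizon angular velocity `Ω = a(1 − Λr²/3)/(r² + a²)`. -/
noncomputable def ΩKdS (Λ a r : ℝ) : ℝ := a * (1 - Λ / 3 * r ^ 2) / (r ^ 2 + a ^ 2)

set_option maxHeartbeats 1600000 in
lemma first_law (Λ m a r m' a' r' : ℝ) (hΞ : (1 + a ^ 2 * Λ / 3) ≠ 0)
    (hra : r ^ 2 + a ^ 2 ≠ 0)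
    (hΔ : (r ^ 2 + a ^ 2) * (1 - Λ / 3 * r ^ 2) - 2 * m * r = 0)
    (hc : Δr' Λ m a r * r' + 2 * a * (1 - Λ / 3 * r ^ 2) * a' - 2 * r * m' = 0) :
    κKdS Λ m a r *
        (((2 * r * r' + 2 * a * a') * (1 + a ^ 2 * Λ / 3)
            - (r ^ 2 + a ^ 2) * (2 * a * a' * (Λ / 3))) / (2 * (1 + a ^ 2 * Λ / 3) ^ 2))
      + ΩKdS Λ a r *
        (((m' * a + m * a') * (1 + a ^ 2 * Λ / 3) ^ 2
            - m * a * (2 * (1 + a ^ 2 * Λ / 3) * (2 * a * a' * (Λ / 3))))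
          / (1 + a ^ 2 * Λ / 3) ^ 4)
      = (m' * (1 + a ^ 2 * Λ / 3) ^ 2
            - m * (2 * (1 + a ^ 2 * Λ / 3) * (2 * a * a' * (Λ / 3))))
          / (1 + a ^ 2 * Λ / 3) ^ 4 := by
  have key : Δr' Λ m a r *
        ((2 * r * r' + 2 * a * a') * (1 + a ^ 2 * Λ / 3)
          - (r ^ 2 + a ^ 2) * (2 * a * a' * (Λ / 3))) * (1 + a ^ 2 * Λ / 3) ^ 2
      + 4 * a * (1 - Λ / 3 * r ^ 2) *
        ((m' * a + m * a') * (1 + a ^ 2 * Λ / 3) ^ 2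
          - m * a * (2 * (1 + a ^ 2 * Λ / 3) * (2 * a * a' * (Λ / 3))))
      = 4 * (r ^ 2 + a ^ 2) *
        (m' * (1 + a ^ 2 * Λ / 3) ^ 2
          - m * (2 * (1 + a ^ 2 * Λ / 3) * (2 * a * a' * (Λ / 3)))) := by
    simp only [Δr'] at hc ⊢
    linear_combination
      (-(8/3)*Λ*a*r*a' - (16/9)*Λ^2*a^3*r*a' - (8/27)*Λ^3*a^5*r*a') * hΔ +
      (2*r + 2*Λ*a^2*r + (2/3)*Λ^2*a^4*r + (2/27)*Λ^3*a^6*r) * hc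
  have h2 : (2 : ℝ) * (r ^ 2 + a ^ 2) ≠ 0 := mul_ne_zero two_ne_zero hra
  have hΞ2 : ((1 + a ^ 2 * Λ / 3) ^ 2 : ℝ) ≠ 0 := pow_ne_zero _ hΞ
  have hΞ4 : ((1 + a ^ 2 * Λ / 3) ^ 4 : ℝ) ≠ 0 := pow_ne_zero _ hΞ
  have hA : (2 : ℝ) * (r ^ 2 + a ^ 2) * (2 * (1 + a ^ 2 * Λ / 3) ^ 2) ≠ 0 :=
    mul_ne_zero h2 (mul_ne_zero two_ne_zero hΞ2)
  have hB : ((r ^ 2 + a ^ 2) * (1 + a ^ 2 * Λ / 3) ^ 4 : ℝ) ≠ 0 := mul_ne_zero hra hΞ4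
  rw [κKdS, ΩKdS, div_mul_div_comm, div_mul_div_comm, div_add_div _ _ hA hB,
    div_eq_div_iff (mul_ne_zero hA hB) hΞ4]
  linear_combination ((r ^ 2 + a ^ 2) * (1 + a ^ 2 * Λ / 3) ^ 6) * key

lemma combine_laws (κ₁ κ₂ Ω₁ Ω₂ D1 D2 DJ DM p : ℝ) (hκ : κ₁ ≠ 0) (hp : p ≠ 0)
    (h1 : κ₁ * D1 + Ω₁ * DJ = DM) (h2 : κ₂ * D2 + Ω₂ * DJ = DM) :
    D1 = κ₂ / (8 * p * κ₁) * (8 * p * D2) + (Ω₂ - Ω₁) / κ₁ * DJ := by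
  field_simp
  linear_combination h1 - h2


set_option maxHeartbeats 1600000 in
/-- Two-horizon variational identity (29III15.1): along a differentiable
family of Kerr–de Sitter data with two horizons `r₁, r₂` (each with `Δ_r(r_i) = 0`,
`Ξ > 0`, `r_i² + a² > 0`) and `κ₁ ≠ 0`,
`d(A₁/(8π))/ds = (κ₂/(8πκ₁)) dA₂/ds + ((Ω₂ − Ω₁)/κ₁) dJ/ds`. -/
theorem two_horizon_identity (Λ : ℝ) (m a r₁ r₂ : ℝ → ℝ)
    (hm : ∀ s ∈ Set.Ioo (-1 : ℝ) 1, DifferentiableAt ℝ m s)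
    (ha : ∀ s ∈ Set.Ioo (-1 : ℝ) 1, DifferentiableAt ℝ a s)
    (hr₁ : ∀ s ∈ Set.Ioo (-1 : ℝ) 1, DifferentiableAt ℝ r₁ s)
    (hr₂ : ∀ s ∈ Set.Ioo (-1 : ℝ) 1, DifferentiableAt ℝ r₂ s)
    (hΔ₁ : ∀ s ∈ Set.Ioo (-1 : ℝ) 1, Δr Λ (m s) (a s) (r₁ s) = 0)
    (hΔ₂ : ∀ s ∈ Set.Ioo (-1 : ℝ) 1, Δr Λ (m s) (a s) (r₂ s) = 0)
    (hΞ : ∀ s ∈ Set.Ioo (-1 : ℝ) 1, 0 < 1 + (a s) ^ 2 * Λ / 3)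
    (hra₁ : ∀ s ∈ Set.Ioo (-1 : ℝ) 1, 0 < (r₁ s) ^ 2 + (a s) ^ 2)
    (hra₂ : ∀ s ∈ Set.Ioo (-1 : ℝ) 1, 0 < (r₂ s) ^ 2 + (a s) ^ 2)
    (hκ₁ : ∀ s ∈ Set.Ioo (-1 : ℝ) 1, κKdS Λ (m s) (a s) (r₁ s) ≠ 0) :
    ∀ s ∈ Set.Ioo (-1 : ℝ) 1,
      deriv (fun t =>
          (4 * Real.pi * ((r₁ t) ^ 2 + (a t) ^ 2) / (1 + (a t) ^ 2 * Λ / 3)) /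
            (8 * Real.pi)) s
      = κKdS Λ (m s) (a s) (r₂ s) / (8 * Real.pi * κKdS Λ (m s) (a s) (r₁ s)) *
          deriv (fun t => 4 * Real.pi * ((r₂ t) ^ 2 + (a t) ^ 2) / (1 + (a t) ^ 2 * Λ / 3)) s
        + (ΩKdS Λ (a s) (r₂ s) - ΩKdS Λ (a s) (r₁ s)) / κKdS Λ (m s) (a s) (r₁ s) *
          deriv (fun t => m t * a t / (1 + (a t) ^ 2 * Λ / 3) ^ 2) s := by
  intro s hs
  obtain ⟨m', Hm⟩ : ∃ d, HasDerivAt m d s := ⟨_, (hm s hs).hasDerivAt⟩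
  obtain ⟨a', Ha⟩ : ∃ d, HasDerivAt a d s := ⟨_, (ha s hs).hasDerivAt⟩
  obtain ⟨c₁, Hc₁⟩ : ∃ d, HasDerivAt r₁ d s := ⟨_, (hr₁ s hs).hasDerivAt⟩
  obtain ⟨c₂, Hc₂⟩ : ∃ d, HasDerivAt r₂ d s := ⟨_, (hr₂ s hs).hasDerivAt⟩
  have hΞne : (1 + (a s) ^ 2 * Λ / 3) ≠ 0 := ne_of_gt (hΞ s hs)
  have hraₐ : ((r₁ s) ^ 2 + (a s) ^ 2) ≠ 0 := ne_of_gt (hra₁ s hs)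
  have hraᵦ : ((r₂ s) ^ 2 + (a s) ^ 2) ≠ 0 := ne_of_gt (hra₂ s hs)
  have hπ : Real.pi ≠ 0 := Real.pi_ne_zero
  -- squares
  have Ha2 : HasDerivAt (fun t => (a t) ^ 2) (2 * a s * a') s := by
    exact (Ha.fun_pow 2).congr_deriv (by norm_num)
  have Hr₁2 : HasDerivAt (fun t => (r₁ t) ^ 2) (2 * r₁ s * c₁) s := by
    exact (Hc₁.fun_pow 2).congr_deriv (by norm_num)
  have Hr₂2 : HasDerivAt (fun t => (r₂ t) ^ 2) (2 * r₂ s * c₂) s := by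
    exact (Hc₂.fun_pow 2).congr_deriv (by norm_num)
  -- Ξ
  have HG : HasDerivAt (fun t => 1 + (a t) ^ 2 * Λ / 3) (2 * a s * a' * Λ / 3) s :=
    ((Ha2.mul_const Λ).div_const 3).const_add 1
  have HS₁ : HasDerivAt (fun t => (r₁ t) ^ 2 + (a t) ^ 2) (2 * r₁ s * c₁ + 2 * a s * a') s :=
    Hr₁2.add Ha2
  have HS₂ : HasDerivAt (fun t => (r₂ t) ^ 2 + (a t) ^ 2) (2 * r₂ s * c₂ + 2 * a s * a') s :=
    Hr₂2.add Ha2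
  -- the three derivative computations
  have H1 := (((HS₁.const_mul (4 * Real.pi)).div HG hΞne).div_const (8 * Real.pi))
  have H2 := ((HS₂.const_mul (4 * Real.pi)).div HG hΞne)
  have HJ := (Hm.mul Ha).div (HG.pow 2) (pow_ne_zero 2 hΞne)
  have e1 := H1.deriv
  have e2 := H2.deriv
  have eJ := HJ.deriv
  -- constraint derivatives vanish
  have hev₁ : (fun t => ((r₁ t) ^ 2 + (a t) ^ 2) * (1 - Λ / 3 * (r₁ t) ^ 2) - 2 * m t * r₁ t)
      =ᶠ[nhds s] fun _ => (0 : ℝ) := by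
    filter_upwards [isOpen_Ioo.mem_nhds hs] with t ht using hΔ₁ t ht
  have hev₂ : (fun t => ((r₂ t) ^ 2 + (a t) ^ 2) * (1 - Λ / 3 * (r₂ t) ^ 2) - 2 * m t * r₂ t)
      =ᶠ[nhds s] fun _ => (0 : ℝ) := by
    filter_upwards [isOpen_Ioo.mem_nhds hs] with t ht using hΔ₂ t ht
  have HU₁ : HasDerivAt (fun t => 1 - Λ / 3 * (r₁ t) ^ 2) (-(Λ / 3 * (2 * r₁ s * c₁))) s :=
    (Hr₁2.const_mul (Λ / 3)).const_sub 1
  have HU₂ : HasDerivAt (fun t => 1 - Λ / 3 * (r₂ t) ^ 2) (-(Λ / 3 * (2 * r₂ s * c₂))) s :=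
    (Hr₂2.const_mul (Λ / 3)).const_sub 1
  have HC₁ := (HS₁.mul HU₁).sub ((Hm.const_mul 2).mul Hc₁)
  have HC₂ := (HS₂.mul HU₂).sub ((Hm.const_mul 2).mul Hc₂)
  have hz₁ : (2 * r₁ s * c₁ + 2 * a s * a') * (1 - Λ / 3 * (r₁ s) ^ 2) +
      ((r₁ s) ^ 2 + (a s) ^ 2) * -(Λ / 3 * (2 * r₁ s * c₁)) -
      (2 * m' * r₁ s + 2 * m s * c₁) = 0 := by
    rw [← HC₁.deriv]; exact hev₁.deriv_eq.trans (by simp)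
  have hz₂ : (2 * r₂ s * c₂ + 2 * a s * a') * (1 - Λ / 3 * (r₂ s) ^ 2) +
      ((r₂ s) ^ 2 + (a s) ^ 2) * -(Λ / 3 * (2 * r₂ s * c₂)) -
      (2 * m' * r₂ s + 2 * m s * c₂) = 0 := by
    rw [← HC₂.deriv]; exact hev₂.deriv_eq.trans (by simp)
  -- first-law inputs
  have hΔa := hΔ₁ s hs
  have hΔb := hΔ₂ s hs
  simp only [Δr] at hΔa hΔb
  have hca : Δr' Λ (m s) (a s) (r₁ s) * c₁ + 2 * a s * (1 - Λ / 3 * (r₁ s) ^ 2) * a' -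
      2 * r₁ s * m' = 0 := by
    simp only [Δr']; linear_combination hz₁
  have hcb : Δr' Λ (m s) (a s) (r₂ s) * c₂ + 2 * a s * (1 - Λ / 3 * (r₂ s) ^ 2) * a' -
      2 * r₂ s * m' = 0 := by
    simp only [Δr']; linear_combination hz₂
  have FL₁ := first_law Λ (m s) (a s) (r₁ s) m' a' c₁ hΞne hraₐ hΔa hca
  have FL₂ := first_law Λ (m s) (a s) (r₂ s) m' a' c₂ hΞne hraᵦ hΔb hcb
  erw [e1, e2, eJ]
  have hD1 : (4 * Real.pi * (2 * r₁ s * c₁ + 2 * a s * a') * (1 + a s ^ 2 * Λ / 3) -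
        4 * Real.pi * (r₁ s ^ 2 + a s ^ 2) * (2 * a s * a' * Λ / 3)) /
        (1 + a s ^ 2 * Λ / 3) ^ 2 / (8 * Real.pi) =
      ((2 * r₁ s * c₁ + 2 * a s * a') * (1 + a s ^ 2 * Λ / 3)
          - (r₁ s ^ 2 + a s ^ 2) * (2 * a s * a' * (Λ / 3))) /
        (2 * (1 + a s ^ 2 * Λ / 3) ^ 2) := by
    rw [div_div, div_eq_div_iff (mul_ne_zero (pow_ne_zero 2 hΞne) (by positivity))
      (mul_ne_zero two_ne_zero (pow_ne_zero 2 hΞne))]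
    ring
  have hD2 : (4 * Real.pi * (2 * r₂ s * c₂ + 2 * a s * a') * (1 + a s ^ 2 * Λ / 3) -
        4 * Real.pi * (r₂ s ^ 2 + a s ^ 2) * (2 * a s * a' * Λ / 3)) /
        (1 + a s ^ 2 * Λ / 3) ^ 2 =
      8 * Real.pi * (((2 * r₂ s * c₂ + 2 * a s * a') * (1 + a s ^ 2 * Λ / 3)
          - (r₂ s ^ 2 + a s ^ 2) * (2 * a s * a' * (Λ / 3))) /
        (2 * (1 + a s ^ 2 * Λ / 3) ^ 2)) := by
    conv_rhs => rw [← mul_div_assoc]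
    rw [div_eq_div_iff (pow_ne_zero 2 hΞne)
      (mul_ne_zero two_ne_zero (pow_ne_zero 2 hΞne))]
    ring
  have hDJ : ((m' * a s + m s * a') * (1 + a s ^ 2 * Λ / 3) ^ 2 -
        m s * a s * ((2 : ℕ) * (1 + a s ^ 2 * Λ / 3) ^ (2 - 1) * (2 * a s * a' * Λ / 3))) /
        ((1 + a s ^ 2 * Λ / 3) ^ 2) ^ 2 =
      ((m' * a s + m s * a') * (1 + a s ^ 2 * Λ / 3) ^ 2 -
          m s * a s * (2 * (1 + a s ^ 2 * Λ / 3) * (2 * a s * a' * (Λ / 3)))) /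
        (1 + a s ^ 2 * Λ / 3) ^ 4 := by
    rw [div_eq_div_iff (pow_ne_zero 2 (pow_ne_zero 2 hΞne)) (pow_ne_zero 4 hΞne)]
    push_cast
    ring
  erw [hD1, hD2, hDJ]
  exact combine_laws _ _ _ _ _ _ _ _ Real.pi (hκ₁ s hs) hπ FL₁ FL₂
end

section
/- Let Λ > 0 and m, a, r ∈ ℝ with Ξ := 1 + a²Λ/3 > 0 and Δ_r(r) = 0. Set ℓ := √(3/Λ), M := mΞ^{−2}, J := Ma, z := (r² + a²)/(ℓ²Ξ), μ := M/ℓ, and j := J/ℓ². Then z²(1 − z)² − 4zμ² − 4j²(z − 1) = 0. -/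
/-- The dimensionless horizon equation (30III15.1) of Kerr–de Sitter:
for `Λ > 0`, `Ξ = 1 + a²Λ/3 > 0` and a horizon radius `r` (`Δ_r(r) = 0`), setting
`ℓ = √(3/Λ)`, `M = mΞ⁻²`, `J = Ma`, `z = (r² + a²)/(ℓ²Ξ)`, `μ = M/ℓ`, `j = J/ℓ²`, one has
`z²(1 − z)² − 4zμ² − 4j²(z − 1) = 0`. -/
theorem kds_dimensionless_horizon_equation (Λ m a r : ℝ) (hΛ : 0 < Λ)
    (hΞ : 0 < 1 + a ^ 2 * Λ / 3)
    (hΔ : (r ^ 2 + a ^ 2) * (1 - Λ / 3 * r ^ 2) - 2 * m * r = 0) :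
    let Ξ := 1 + a ^ 2 * Λ / 3
    let ℓ := Real.sqrt (3 / Λ)
    let M := m / Ξ ^ 2
    let J := M * a
    let z := (r ^ 2 + a ^ 2) / (ℓ ^ 2 * Ξ)
    let μ := M / ℓ
    let j := J / ℓ ^ 2
    z ^ 2 * (1 - z) ^ 2 - 4 * z * μ ^ 2 - 4 * j ^ 2 * (z - 1) = 0 := by
  intro Ξ ℓ M J z μ j
  have hΞdef : Ξ = 1 + a ^ 2 * Λ / 3 := rfl
  have hΛ' : Λ ≠ 0 := hΛ.ne'
  have hΞ' : Ξ ≠ 0 := hΞ.ne'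
  have hl : ℓ ^ 2 = 3 / Λ := Real.sq_sqrt (by positivity)
  have hl' : ℓ ≠ 0 := by
    intro h
    rw [h, zero_pow two_ne_zero] at hl
    have : (0:ℝ) < 3 / Λ := by positivity
    linarith [hl ▸ this]
  have hΔ' : (r ^ 2 + a ^ 2) * (1 - Λ / 3 * r ^ 2) = 2 * m * r := by linarith
  have hz1 : z * (1 - z) = 2 * m * r * Λ / (3 * Ξ ^ 2) := by
    show (r ^ 2 + a ^ 2) / (ℓ ^ 2 * Ξ) * (1 - (r ^ 2 + a ^ 2) / (ℓ ^ 2 * Ξ))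
      = 2 * m * r * Λ / (3 * Ξ ^ 2)
    rw [hl, hΞdef]
    field_simp
    linear_combination 3 * hΔ'
  have h2 : 4 * z * μ ^ 2 + 4 * j ^ 2 * (z - 1)
      = 4 * m ^ 2 * r ^ 2 * Λ ^ 2 / (9 * Ξ ^ 4) := by
    show 4 * ((r ^ 2 + a ^ 2) / (ℓ ^ 2 * Ξ)) * (m / Ξ ^ 2 / ℓ) ^ 2
        + 4 * (m / Ξ ^ 2 * a / ℓ ^ 2) ^ 2 * ((r ^ 2 + a ^ 2) / (ℓ ^ 2 * Ξ) - 1)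
      = 4 * m ^ 2 * r ^ 2 * Λ ^ 2 / (9 * Ξ ^ 4)
    rw [div_pow, div_pow, div_pow, hl, hΞdef]
    field_simp
    ring
  calc z ^ 2 * (1 - z) ^ 2 - 4 * z * μ ^ 2 - 4 * j ^ 2 * (z - 1)
      = (z * (1 - z)) ^ 2 - (4 * z * μ ^ 2 + 4 * j ^ 2 * (z - 1)) := by ring
    _ = (2 * m * r * Λ / (3 * Ξ ^ 2)) ^ 2 - 4 * m ^ 2 * r ^ 2 * Λ ^ 2 / (9 * Ξ ^ 4) := by
        rw [hz1, h2]
    _ = 0 := by rw [hΞdef]; field_simp; ring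
end

section
/- Let μ, j ∈ ℝ and let z₁, z₂ ∈ ℝ with z₁ ≠ z₂, z₁ ≠ 0, z₂ ≠ 0, and suppose both z₁ and z₂ satisfy the equation z²(1 − z)² − 4zμ² − 4j²(z − 1) = 0. Then z₁z₂·(1 − 2z₁ − 2z₂ + z₁z₂ + z₁² + z₂²) = 4j². -/
/-- Elimination identity (1IV15.1): if `z₁ ≠ z₂` are two nonzero roots of
the dimensionless horizon equation `z²(1 − z)² − 4zμ² − 4j²(z − 1) = 0`, then
`z₁z₂(1 − 2z₁ − 2z₂ + z₁z₂ + z₁² + z₂²) = 4j²`. -/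
theorem two_horizon_area_relation (μ j z₁ z₂ : ℝ) (hne : z₁ ≠ z₂)
    (hz₁ : z₁ ≠ 0) (hz₂ : z₂ ≠ 0)
    (h₁ : z₁ ^ 2 * (1 - z₁) ^ 2 - 4 * z₁ * μ ^ 2 - 4 * j ^ 2 * (z₁ - 1) = 0)
    (h₂ : z₂ ^ 2 * (1 - z₂) ^ 2 - 4 * z₂ * μ ^ 2 - 4 * j ^ 2 * (z₂ - 1) = 0) :
    z₁ * z₂ * (1 - 2 * z₁ - 2 * z₂ + z₁ * z₂ + z₁ ^ 2 + z₂ ^ 2) = 4 * j ^ 2 := by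
  have hd : z₁ - z₂ ≠ 0 := sub_ne_zero.mpr hne
  have key : (z₁ - z₂) * (z₁ * z₂ * (1 - 2 * z₁ - 2 * z₂ + z₁ * z₂ + z₁ ^ 2 + z₂ ^ 2) - 4 * j ^ 2) = 0 := by
    linear_combination z₂ * h₁ - z₁ * h₂
  have := mul_eq_zero.mp key
  rcases this with h | h
  · exact absurd h hd
  · linarith
end

section
/- Let Λ, m, a, r ∈ ℝ with Ξ := 1 + a²Λ/3 > 0 and Δ_r(r) = 0. Then 2π·∫₀^π (sin θ / (√(Δ_θ(θ))·Ξ))·√(Δ_θ(θ)·(r² + a²)² − a²·Δ_r(r)·sin²θ) dθ = 4π(r² + a²)/Ξ, where Δ_θ(θ) := 1 + (a²Λ/3)cos²θ. -/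
open intervalIntegral

/-- Horizon-area computation (3X13.4): with `Ξ = 1 + a²Λ/3 > 0`,
`Δ_θ(θ) = 1 + (a²Λ/3)cos²θ`, and `Δ_r(r) = 0`, integrating the area density
`λ = (sin θ/(√Δ_θ · Ξ))·√(Δ_θ(r² + a²)² − a²Δ_r sin²θ)` over the sphere gives
`A = 4π(r² + a²)/Ξ`. -/
theorem kds_horizon_area (Λ m a r : ℝ) (hΞ : 0 < 1 + a ^ 2 * Λ / 3)
    (hΔ : (r ^ 2 + a ^ 2) * (1 - Λ / 3 * r ^ 2) - 2 * m * r = 0) :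
    2 * Real.pi *
        ∫ θ in (0 : ℝ)..Real.pi,
          Real.sin θ / (Real.sqrt (1 + a ^ 2 * Λ / 3 * Real.cos θ ^ 2) * (1 + a ^ 2 * Λ / 3)) *
            Real.sqrt ((1 + a ^ 2 * Λ / 3 * Real.cos θ ^ 2) * (r ^ 2 + a ^ 2) ^ 2 -
              a ^ 2 * ((r ^ 2 + a ^ 2) * (1 - Λ / 3 * r ^ 2) - 2 * m * r) * Real.sin θ ^ 2)
      = 4 * Real.pi * (r ^ 2 + a ^ 2) / (1 + a ^ 2 * Λ / 3) := by
  have key : ∀ θ : ℝ,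
      Real.sin θ / (Real.sqrt (1 + a ^ 2 * Λ / 3 * Real.cos θ ^ 2) * (1 + a ^ 2 * Λ / 3)) *
        Real.sqrt ((1 + a ^ 2 * Λ / 3 * Real.cos θ ^ 2) * (r ^ 2 + a ^ 2) ^ 2 -
          a ^ 2 * ((r ^ 2 + a ^ 2) * (1 - Λ / 3 * r ^ 2) - 2 * m * r) * Real.sin θ ^ 2)
      = (r ^ 2 + a ^ 2) / (1 + a ^ 2 * Λ / 3) * Real.sin θ := by
    intro θ
    have hΔθ : 0 < 1 + a ^ 2 * Λ / 3 * Real.cos θ ^ 2 := by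
      rcases le_or_gt 0 (a ^ 2 * Λ / 3) with h | h
      · positivity
      · have hc : Real.cos θ ^ 2 ≤ 1 := Real.cos_sq_le_one θ
        nlinarith
    have hsq : Real.sqrt (1 + a ^ 2 * Λ / 3 * Real.cos θ ^ 2) ≠ 0 :=
      ne_of_gt (Real.sqrt_pos.mpr hΔθ)
    rw [hΔ]
    have : (1 + a ^ 2 * Λ / 3 * Real.cos θ ^ 2) * (r ^ 2 + a ^ 2) ^ 2 -
        a ^ 2 * 0 * Real.sin θ ^ 2 =
        (1 + a ^ 2 * Λ / 3 * Real.cos θ ^ 2) * (r ^ 2 + a ^ 2) ^ 2 := by ring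
    rw [this, Real.sqrt_mul hΔθ.le, Real.sqrt_sq (by positivity : (0:ℝ) ≤ r ^ 2 + a ^ 2)]
    generalize hs : Real.sqrt (1 + a ^ 2 * Λ / 3 * Real.cos θ ^ 2) = s at hsq
    have h3 : (3 : ℝ) + a ^ 2 * Λ ≠ 0 := by nlinarith
    field_simp
  rw [intervalIntegral.integral_congr (fun θ _ => key θ),
    intervalIntegral.integral_const_mul, integral_sin]
  simp [Real.cos_pi]
  ring
end

section
/- Let Λ, m, a, r ∈ ℝ with r ≠ 0 and Ξ := 1 + a²Λ/3 ≠ 0. Then (1/(8π))·∫₀^{2π}∫₀^π (m·a·sin³θ·((r² − a²)·ρ² + 2r²(r² + a²)))/(Ξ²·ρ⁴) dθ dφ = ma/Ξ², where ρ² := r² + a²cos²θ. -/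
open intervalIntegral

/-- Total angular momentum (18V13.21): for `r ≠ 0` and `Ξ = 1 + a²Λ/3 ≠ 0`,
`(1/(8π)) ∫∫ 𝐐_φ = ma/Ξ²`, where
`𝐐_φ = (ma sin³θ/(Ξ²ρ⁴))·[(r² − a²)ρ² + 2r²(r² + a²)]` and `ρ² = r² + a²cos²θ`. -/
theorem kds_angular_momentum_integral (Λ m a r : ℝ) (hr : r ≠ 0)
    (hΞ : 1 + a ^ 2 * Λ / 3 ≠ 0) :
    1 / (8 * Real.pi) *
        ∫ _ in (0 : ℝ)..(2 * Real.pi),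
          ∫ θ in (0 : ℝ)..Real.pi,
            m * a * Real.sin θ ^ 3 *
                ((r ^ 2 - a ^ 2) * (r ^ 2 + a ^ 2 * Real.cos θ ^ 2) +
                  2 * r ^ 2 * (r ^ 2 + a ^ 2)) /
              ((1 + a ^ 2 * Λ / 3) ^ 2 * (r ^ 2 + a ^ 2 * Real.cos θ ^ 2) ^ 2)
      = m * a / (1 + a ^ 2 * Λ / 3) ^ 2 := by
  set Ξ : ℝ := 1 + a ^ 2 * Λ / 3 with hΞdef
  have hvpos : ∀ θ : ℝ, 0 < r ^ 2 + a ^ 2 * Real.cos θ ^ 2 := by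
    intro θ
    positivity
  have hv : ∀ θ : ℝ, r ^ 2 + a ^ 2 * Real.cos θ ^ 2 ≠ 0 := fun θ => (hvpos θ).ne'
  -- antiderivative
  set F : ℝ → ℝ := fun θ =>
    m * a / Ξ ^ 2 *
      (-(3 * Real.cos θ +
          (a ^ 2 * Real.cos θ - (2 * a ^ 2 + r ^ 2) * Real.cos θ ^ 3) /
            (r ^ 2 + a ^ 2 * Real.cos θ ^ 2))) with hFdef
  have hderiv : ∀ θ ∈ Set.uIcc (0 : ℝ) Real.pi,
      HasDerivAt F
        (m * a * Real.sin θ ^ 3 *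
            ((r ^ 2 - a ^ 2) * (r ^ 2 + a ^ 2 * Real.cos θ ^ 2) +
              2 * r ^ 2 * (r ^ 2 + a ^ 2)) /
          (Ξ ^ 2 * (r ^ 2 + a ^ 2 * Real.cos θ ^ 2) ^ 2)) θ := by
    intro θ _
    have hc : HasDerivAt Real.cos (-Real.sin θ) θ := Real.hasDerivAt_cos θ
    have hnum := (hc.const_mul (a ^ 2)).sub ((hc.pow 3).const_mul (2 * a ^ 2 + r ^ 2))
    have hden := ((hc.pow 2).const_mul (a ^ 2)).const_add (r ^ 2)
    have hdiv := hnum.div hden (hv θ)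
    have hsum := (((hc.const_mul 3).add hdiv).neg).const_mul (m * a / Ξ ^ 2)
    refine hsum.congr_deriv ?_
    have hv2 : (r ^ 2 + a ^ 2 * Real.cos θ ^ 2) ≠ 0 := hv θ
    have hΞ2 : Ξ ^ 2 ≠ 0 := pow_ne_zero 2 hΞ
    have hs3 : Real.sin θ ^ 3 = Real.sin θ * (1 - Real.cos θ ^ 2) := by
      rw [pow_succ, Real.sin_sq]
      ring
    simp only [Pi.pow_apply, Pi.sub_apply, Pi.div_apply, Pi.add_apply, Pi.neg_apply, Nat.cast_ofNat]
    rw [hs3]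
    field_simp
    ring
  have hcont : Continuous (fun θ : ℝ =>
      m * a * Real.sin θ ^ 3 *
          ((r ^ 2 - a ^ 2) * (r ^ 2 + a ^ 2 * Real.cos θ ^ 2) +
            2 * r ^ 2 * (r ^ 2 + a ^ 2)) /
        (Ξ ^ 2 * (r ^ 2 + a ^ 2 * Real.cos θ ^ 2) ^ 2)) := by
    apply Continuous.div
    · fun_prop
    · fun_prop
    · intro θ
      exact mul_ne_zero (pow_ne_zero 2 hΞ) (pow_ne_zero 2 (hv θ))
  have hint : (∫ θ in (0 : ℝ)..Real.pi,
      m * a * Real.sin θ ^ 3 *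
          ((r ^ 2 - a ^ 2) * (r ^ 2 + a ^ 2 * Real.cos θ ^ 2) +
            2 * r ^ 2 * (r ^ 2 + a ^ 2)) /
        (Ξ ^ 2 * (r ^ 2 + a ^ 2 * Real.cos θ ^ 2) ^ 2)) = F Real.pi - F 0 := by
    exact intervalIntegral.integral_eq_sub_of_hasDerivAt hderiv (hcont.intervalIntegrable 0 Real.pi)
  have hFval : F Real.pi - F 0 = 4 * (m * a / Ξ ^ 2) := by
    have hva : r ^ 2 + a ^ 2 * (1 : ℝ) ^ 2 ≠ 0 := by
      have := hvpos 0
      simpa using (hv 0)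
    simp only [hFdef, Real.cos_pi, Real.cos_zero]
    have hra : r ^ 2 + a ^ 2 ≠ 0 := by positivity
    field_simp
    ring
  rw [hint, hFval]
  rw [intervalIntegral.integral_const]
  have hπ : Real.pi ≠ 0 := Real.pi_ne_zero
  field_simp
  rw [smul_eq_mul, sub_zero, mul_comm (Ξ ^ 2), mul_assoc, div_mul_cancel₀ _ (pow_ne_zero 2 hΞ)]
  ring
end

section
/- Let m, a, r ∈ ℝ with r ≠ 0. Then (1/(16π))·∫₀^{2π}∫₀^π (4m·(r² − a²cos²θ)·(r² + a²)·sin θ)/((r² + a²cos²θ)²) dθ dφ = m. -/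
open intervalIntegral

/-- The flux of the CYK–Weyl two-form (equation (mKerr)): for `r ≠ 0`,
`(1/(16π)) ∫∫ 4m(r² − a²cos²θ)(r² + a²) sin θ / (r² + a²cos²θ)² dθ dφ = m`. -/
theorem cyk_mass_flux (m a r : ℝ) (hr : r ≠ 0) :
    1 / (16 * Real.pi) *
        ∫ _ in (0 : ℝ)..(2 * Real.pi),
          ∫ θ in (0 : ℝ)..Real.pi,
            4 * m * (r ^ 2 - a ^ 2 * Real.cos θ ^ 2) * (r ^ 2 + a ^ 2) * Real.sin θ /
              (r ^ 2 + a ^ 2 * Real.cos θ ^ 2) ^ 2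
      = m := by
  have hr2 : 0 < r ^ 2 := by positivity
  have hD : ∀ θ : ℝ, 0 < r ^ 2 + a ^ 2 * Real.cos θ ^ 2 := fun θ => by positivity
  have hDne : ∀ θ : ℝ, r ^ 2 + a ^ 2 * Real.cos θ ^ 2 ≠ 0 := fun θ => (hD θ).ne'
  set F : ℝ → ℝ := fun θ =>
    -(4 * m * (r ^ 2 + a ^ 2)) * (Real.cos θ / (r ^ 2 + a ^ 2 * Real.cos θ ^ 2)) with hF
  have hderiv : ∀ θ ∈ Set.uIcc (0 : ℝ) Real.pi, HasDerivAt F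
      (4 * m * (r ^ 2 - a ^ 2 * Real.cos θ ^ 2) * (r ^ 2 + a ^ 2) * Real.sin θ /
        (r ^ 2 + a ^ 2 * Real.cos θ ^ 2) ^ 2) θ := by
    intro θ _
    have hcos : HasDerivAt Real.cos (-Real.sin θ) θ := Real.hasDerivAt_cos θ
    have hden : HasDerivAt (fun θ => r ^ 2 + a ^ 2 * Real.cos θ ^ 2)
        (a ^ 2 * (2 * Real.cos θ * (-Real.sin θ))) θ := by
      have h1 : HasDerivAt (fun θ => Real.cos θ ^ 2) (2 * Real.cos θ * (-Real.sin θ)) θ := by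
        simpa using hcos.fun_pow 2
      simpa using (h1.const_mul (a ^ 2)).const_add (r ^ 2)
    have hdiv := (hcos.fun_div hden (hDne θ)).const_mul (-(4 * m * (r ^ 2 + a ^ 2)))
    convert hdiv using 1
    · rfl
    · rfl
    field_simp
    ring
  have hcont : Continuous fun θ : ℝ =>
      4 * m * (r ^ 2 - a ^ 2 * Real.cos θ ^ 2) * (r ^ 2 + a ^ 2) * Real.sin θ /
        (r ^ 2 + a ^ 2 * Real.cos θ ^ 2) ^ 2 := by
    apply Continuous.div (by continuity) (by continuity)
    intro θ
    exact pow_ne_zero 2 (hDne θ)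
  have hinner : (∫ θ in (0 : ℝ)..Real.pi,
      4 * m * (r ^ 2 - a ^ 2 * Real.cos θ ^ 2) * (r ^ 2 + a ^ 2) * Real.sin θ /
        (r ^ 2 + a ^ 2 * Real.cos θ ^ 2) ^ 2) = 8 * m := by
    rw [intervalIntegral.integral_eq_sub_of_hasDerivAt hderiv (hcont.intervalIntegrable _ _)]
    have h1 : r ^ 2 + a ^ 2 * Real.cos (0:ℝ) ^ 2 ≠ 0 := hDne 0
    have h2 : r ^ 2 + a ^ 2 * Real.cos Real.pi ^ 2 ≠ 0 := hDne Real.pi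
    simp only [hF, Real.cos_pi, Real.cos_zero] at *
    field_simp
    ring
  rw [hinner]
  rw [intervalIntegral.integral_const]
  have hpi : Real.pi ≠ 0 := Real.pi_ne_zero
  field_simp
  ring
end

section
/- Let Λ, m, a ∈ ℝ and θ ∈ ℝ, let r₀ ∈ ℝ with Δ_r(r₀) = 0, Ξ := 1 + a²Λ/3 > 0, r₀² + a² > 0, and r₀² + a²cos²θ > 0. For r with r² + a²cos²θ > 0 define G(r) := [ (sin²θ·Δ_θ)/( (r² + a²cos²θ)·Ξ² ) ]·( aΞ − (r² + a²)·(aΞ/(r₀² + a²)) )² − [ Δ_r(r)/( (r² + a²cos²θ)·Ξ² ) ]·( Ξ − a sin²θ·(aΞ/(r₀² + a²)) )², where Δ_θ := 1 + (a²Λ/3)cos²θ; this is the squared length g(X₀, X₀) of the horizon Killing vector X₀ = Ξ(∂_t + (a/(r₀² + a²))∂_φ) in the Kerr–de Sitter metric. Then G is differentiable near r₀ and lim_{r → r₀} ( −((r² + a²)/(2(r² + a²cos²θ)))·G′(r) ) = Δ_r′(r₀)/(2(r₀² + a²)). -/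
open Filter Real

noncomputable def kP (a θ : ℝ) : ℝ → ℝ := fun r => r ^ 2 + a ^ 2 * Real.cos θ ^ 2

noncomputable def kc (Λ a r₀ : ℝ) : ℝ := a * (1 + a ^ 2 * Λ / 3) / (r₀ ^ 2 + a ^ 2)

noncomputable def kK (Λ a θ r₀ : ℝ) : ℝ :=
  (1 + a ^ 2 * Λ / 3) - a * Real.sin θ ^ 2 * kc Λ a r₀

noncomputable def kN (Λ m a θ r₀ : ℝ) : ℝ → ℝ := fun r =>
  (Real.sin θ ^ 2 * (1 + a ^ 2 * Λ / 3 * Real.cos θ ^ 2) *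
      (a * (1 + a ^ 2 * Λ / 3) - (r ^ 2 + a ^ 2) * kc Λ a r₀) ^ 2
    - ((r ^ 2 + a ^ 2) * (1 - Λ / 3 * r ^ 2) - 2 * m * r) * kK Λ a θ r₀ ^ 2) /
    (1 + a ^ 2 * Λ / 3) ^ 2

noncomputable def kN' (Λ m a θ r₀ : ℝ) : ℝ → ℝ := fun r =>
  (Real.sin θ ^ 2 * (1 + a ^ 2 * Λ / 3 * Real.cos θ ^ 2) *
      (2 * (a * (1 + a ^ 2 * Λ / 3) - (r ^ 2 + a ^ 2) * kc Λ a r₀) * (-(2 * r * kc Λ a r₀)))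
    - (2 * r * (1 - Λ / 3 * r ^ 2) + (r ^ 2 + a ^ 2) * (-(Λ / 3 * (2 * r))) - 2 * m) *
        kK Λ a θ r₀ ^ 2) /
    (1 + a ^ 2 * Λ / 3) ^ 2

noncomputable def kH (Λ m a θ r₀ : ℝ) : ℝ → ℝ := fun r =>
  -((r ^ 2 + a ^ 2) / (2 * kP a θ r)) *
    ((kN' Λ m a θ r₀ r * kP a θ r - kN Λ m a θ r₀ r * (2 * r)) / kP a θ r ^ 2)

lemma kP_hasDeriv (a θ r : ℝ) : HasDerivAt (kP a θ) (2 * r) r := by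
  unfold kP; simpa using (hasDerivAt_pow 2 r).add_const (a ^ 2 * Real.cos θ ^ 2)

lemma kN_hasDeriv (Λ m a θ r₀ r : ℝ) :
    HasDerivAt (kN Λ m a θ r₀) (kN' Λ m a θ r₀ r) r := by
  have h1 : HasDerivAt (fun r : ℝ => r ^ 2 + a ^ 2) (2 * r) r := by
    simpa using (hasDerivAt_pow 2 r).add_const (a ^ 2)
  have hu : HasDerivAt
      (fun r : ℝ => a * (1 + a ^ 2 * Λ / 3) - (r ^ 2 + a ^ 2) * kc Λ a r₀)
      (-(2 * r * kc Λ a r₀)) r := by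
    have := (h1.mul_const (kc Λ a r₀)).const_sub (a * (1 + a ^ 2 * Λ / 3))
    convert this using 1
  have hu2 : HasDerivAt
      (fun r : ℝ => (a * (1 + a ^ 2 * Λ / 3) - (r ^ 2 + a ^ 2) * kc Λ a r₀) ^ 2)
      (2 * (a * (1 + a ^ 2 * Λ / 3) - (r ^ 2 + a ^ 2) * kc Λ a r₀) * (-(2 * r * kc Λ a r₀)))
      r := by
    simpa using hu.fun_pow 2
  have h2 : HasDerivAt (fun r : ℝ => 1 - Λ / 3 * r ^ 2) (-(Λ / 3 * (2 * r))) r := by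
    have := ((hasDerivAt_pow 2 r).const_mul (Λ / 3)).const_sub 1
    exact this.congr_deriv (by push_cast; ring)
  have hΔR : HasDerivAt (fun r : ℝ => (r ^ 2 + a ^ 2) * (1 - Λ / 3 * r ^ 2) - 2 * m * r)
      (2 * r * (1 - Λ / 3 * r ^ 2) + (r ^ 2 + a ^ 2) * (-(Λ / 3 * (2 * r))) - 2 * m) r := by
    have := (h1.fun_mul h2).fun_sub ((hasDerivAt_id r).const_mul (2 * m))
    exact this.congr_deriv (by ring)
  have := ((hu2.const_mul (Real.sin θ ^ 2 * (1 + a ^ 2 * Λ / 3 * Real.cos θ ^ 2))).fun_sub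
      (hΔR.mul_const (kK Λ a θ r₀ ^ 2))).div_const ((1 + a ^ 2 * Λ / 3) ^ 2)
  exact this

set_option maxHeartbeats 1000000 in
/-- Surface-gravity computation (5X13.2).  Let `r₀` be a horizon radius
(`Δ_r(r₀) = 0`), with `Ξ = 1 + a²Λ/3 > 0`, `r₀² + a² > 0`, `r₀² + a²cos²θ > 0`, and let
`G(r) = g(X₀, X₀)` be the squared length of the horizon Killing vector
`X₀ = Ξ(∂_t + a/(r₀² + a²) ∂_φ)`.  Then `G` is differentiable near `r₀` and
`lim_{r → r₀} (−((r² + a²)/(2(r² + a²cos²θ))) G′(r)) = Δ_r′(r₀)/(2(r₀² + a²))`. -/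
theorem kds_surface_gravity (Λ m a θ r₀ : ℝ)
    (hΔ : (r₀ ^ 2 + a ^ 2) * (1 - Λ / 3 * r₀ ^ 2) - 2 * m * r₀ = 0)
    (hΞ : 0 < 1 + a ^ 2 * Λ / 3)
    (hra : 0 < r₀ ^ 2 + a ^ 2)
    (hρ : 0 < r₀ ^ 2 + a ^ 2 * Real.cos θ ^ 2) :
    let Ξ := 1 + a ^ 2 * Λ / 3
    let Δθ := 1 + a ^ 2 * Λ / 3 * Real.cos θ ^ 2
    let G : ℝ → ℝ := fun r =>
      Real.sin θ ^ 2 * Δθ / ((r ^ 2 + a ^ 2 * Real.cos θ ^ 2) * Ξ ^ 2) *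
          (a * Ξ - (r ^ 2 + a ^ 2) * (a * Ξ / (r₀ ^ 2 + a ^ 2))) ^ 2
        - ((r ^ 2 + a ^ 2) * (1 - Λ / 3 * r ^ 2) - 2 * m * r) /
            ((r ^ 2 + a ^ 2 * Real.cos θ ^ 2) * Ξ ^ 2) *
          (Ξ - a * Real.sin θ ^ 2 * (a * Ξ / (r₀ ^ 2 + a ^ 2))) ^ 2
    (∃ ε > 0, ∀ r ∈ Metric.ball r₀ ε, DifferentiableAt ℝ G r) ∧
      Filter.Tendsto
        (fun r => -((r ^ 2 + a ^ 2) / (2 * (r ^ 2 + a ^ 2 * Real.cos θ ^ 2))) * deriv G r)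
        (nhdsWithin r₀ {r₀}ᶜ)
        (nhds ((2 * r₀ * (1 - Λ / 3 * r₀ ^ 2) - 2 * Λ * r₀ / 3 * (r₀ ^ 2 + a ^ 2) - 2 * m) /
          (2 * (r₀ ^ 2 + a ^ 2)))) := by
  intro Ξ Δθ G
  have hΞ0 : (1 + a ^ 2 * Λ / 3 : ℝ) ≠ 0 := ne_of_gt hΞ
  have hra0 : (r₀ ^ 2 + a ^ 2 : ℝ) ≠ 0 := ne_of_gt hra
  have hGdef : G = fun r =>
      Real.sin θ ^ 2 * (1 + a ^ 2 * Λ / 3 * Real.cos θ ^ 2) /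
          ((r ^ 2 + a ^ 2 * Real.cos θ ^ 2) * (1 + a ^ 2 * Λ / 3) ^ 2) *
          (a * (1 + a ^ 2 * Λ / 3) -
            (r ^ 2 + a ^ 2) * (a * (1 + a ^ 2 * Λ / 3) / (r₀ ^ 2 + a ^ 2))) ^ 2
        - ((r ^ 2 + a ^ 2) * (1 - Λ / 3 * r ^ 2) - 2 * m * r) /
            ((r ^ 2 + a ^ 2 * Real.cos θ ^ 2) * (1 + a ^ 2 * Λ / 3) ^ 2) *
          ((1 + a ^ 2 * Λ / 3) -
            a * Real.sin θ ^ 2 * (a * (1 + a ^ 2 * Λ / 3) / (r₀ ^ 2 + a ^ 2))) ^ 2 := rfl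
  have hGN : G = fun r => kN Λ m a θ r₀ r / kP a θ r := by
    rw [hGdef]
    funext r
    rcases eq_or_ne (r ^ 2 + a ^ 2 * Real.cos θ ^ 2) 0 with h0 | h0
    · unfold kN kP
      rw [h0]
      simp
    · have hP0 : kP a θ r ≠ 0 := h0
      unfold kN kP kK kc
      field_simp
  have hPev : ∀ᶠ r in nhds r₀, 0 < kP a θ r := by
    have hc : ContinuousAt (kP a θ) r₀ := by unfold kP; fun_prop
    exact hc (Ioi_mem_nhds (show (0:ℝ) < kP a θ r₀ from hρ))
  constructor
  · obtain ⟨ε, hε, hball⟩ := Metric.eventually_nhds_iff_ball.mp hPev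
    refine ⟨ε, hε, fun r hr => ?_⟩
    rw [hGN]
    exact ((kN_hasDeriv Λ m a θ r₀ r).div (kP_hasDeriv a θ r) (hball r hr).ne').differentiableAt
  · have hev : (fun r => -((r ^ 2 + a ^ 2) / (2 * (r ^ 2 + a ^ 2 * Real.cos θ ^ 2))) *
        deriv G r) =ᶠ[nhds r₀] kH Λ m a θ r₀ := by
      filter_upwards [hPev] with r hr
      rw [hGN, ((kN_hasDeriv Λ m a θ r₀ r).fun_div (kP_hasDeriv a θ r) hr.ne').deriv]
      rfl
    have hP0 : kP a θ r₀ ≠ 0 := ne_of_gt hρ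
    have hHc : ContinuousAt (kH Λ m a θ r₀) r₀ := by
      have hNc : Continuous (kN Λ m a θ r₀) := by
        unfold kN; exact (by fun_prop : Continuous fun r : ℝ =>
          Real.sin θ ^ 2 * (1 + a ^ 2 * Λ / 3 * Real.cos θ ^ 2) *
            (a * (1 + a ^ 2 * Λ / 3) - (r ^ 2 + a ^ 2) * kc Λ a r₀) ^ 2
          - ((r ^ 2 + a ^ 2) * (1 - Λ / 3 * r ^ 2) - 2 * m * r) * kK Λ a θ r₀ ^ 2).div_const _
      have hN'c : Continuous (kN' Λ m a θ r₀) := by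
        unfold kN'; exact (by fun_prop : Continuous fun r : ℝ =>
          Real.sin θ ^ 2 * (1 + a ^ 2 * Λ / 3 * Real.cos θ ^ 2) *
            (2 * (a * (1 + a ^ 2 * Λ / 3) - (r ^ 2 + a ^ 2) * kc Λ a r₀) * (-(2 * r * kc Λ a r₀)))
          - (2 * r * (1 - Λ / 3 * r ^ 2) + (r ^ 2 + a ^ 2) * (-(Λ / 3 * (2 * r))) - 2 * m) *
              kK Λ a θ r₀ ^ 2).div_const _
      have hPc : Continuous (kP a θ) := by unfold kP; fun_prop
      unfold kH
      refine ContinuousAt.mul (ContinuousAt.neg (ContinuousAt.div (by fun_prop)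
        (by fun_prop) ?_)) (ContinuousAt.div ?_ ?_ ?_)
      · simpa using mul_ne_zero two_ne_zero hP0
      · exact ((hN'c.mul hPc).sub (hNc.mul (by fun_prop))).continuousAt
      · exact (hPc.pow 2).continuousAt
      · exact pow_ne_zero 2 hP0
    have hu0 : a * (1 + a ^ 2 * Λ / 3) - (r₀ ^ 2 + a ^ 2) * kc Λ a r₀ = 0 := by
      unfold kc; field_simp; ring
    have hKval : kK Λ a θ r₀ = (1 + a ^ 2 * Λ / 3) * kP a θ r₀ / (r₀ ^ 2 + a ^ 2) := by
      unfold kK kc kP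
      rw [Real.sin_sq]
      field_simp
      ring
    have hN0 : kN Λ m a θ r₀ r₀ = 0 := by
      unfold kN
      rw [hu0, hΔ]
      simp
    have hK2 : kK Λ a θ r₀ ^ 2 =
        (1 + a ^ 2 * Λ / 3) ^ 2 * kP a θ r₀ ^ 2 / (r₀ ^ 2 + a ^ 2) ^ 2 := by
      rw [hKval]; field_simp
    have hval : kH Λ m a θ r₀ r₀ =
        (2 * r₀ * (1 - Λ / 3 * r₀ ^ 2) - 2 * Λ * r₀ / 3 * (r₀ ^ 2 + a ^ 2) - 2 * m) /
          (2 * (r₀ ^ 2 + a ^ 2)) := by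
      unfold kH kN'
      rw [hu0, hN0, hK2]
      simp only [mul_zero, zero_mul, zero_sub]
      generalize hPP : kP a θ r₀ = P at hP0 ⊢
      generalize hQQ : (1 + a ^ 2 * Λ / 3 : ℝ) = Q at hΞ0 ⊢
      generalize hRR : (r₀ ^ 2 + a ^ 2 : ℝ) = R at hra0 ⊢
      field_simp
      ring
    have h1 : Filter.Tendsto (fun r => -((r ^ 2 + a ^ 2) /
        (2 * (r ^ 2 + a ^ 2 * Real.cos θ ^ 2))) * deriv G r) (nhds r₀)
        (nhds (kH Λ m a θ r₀ r₀)) := hHc.tendsto.congr' hev.symm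
    rw [hval] at h1
    exact h1.mono_left nhdsWithin_le_nhds
end

section
/- Let Λ < 0, m ∈ ℝ, and a ∈ ℝ with Ξ := 1 + a²Λ/3 > 0, and set ℓ² := −3/Λ. Then (1/(16πℓ²))·∫₀^{2π}∫₀^π ( −(36√6·m·(12 − a²Λ·(1 − cos 2Θ)))/(Λ·(6 + a²Λ·(1 − cos 2Θ))^{5/2}) )·sin Θ dΘ dΦ = 9m/(a²Λ + 3)² = m/Ξ². -/
open intervalIntegral



lemma core_id (c A S C W Q : ℝ) (hW0 : W ≠ 0) (hQ0 : Q ≠ 0)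
    (h62 : (6:ℝ) + 2*c ≠ 0)
    (hSC : S^2 + C^2 = 1) (hW2 : W^2 = Q) (hQ : Q = 6 + 2*c*S^2) :
    A * S * (18 - Q) / (Q ^ 2 * W) =
      ((-S * (-6*A/(6+2*c) + A*(2*c-6)/(6+2*c)^2 * Q) +
          C * (A*(2*c-6)/(6+2*c)^2 * (4 * c * S * C))) * (Q * W) -
        C * (-6*A/(6+2*c) + A*(2*c-6)/(6+2*c)^2 * Q) *
          (4 * c * S * C * W + Q * (4 * c * S * C / (2 * W)))) /
        (Q * W) ^ 2 := by
  field_simp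
  rw [hW2, show C ^ 2 = 1 - S ^ 2 by linarith]; subst hQ; ring

lemma inner_int (c A : ℝ) (hc : c ≤ 0) (hc3 : 0 < 3 + c) :
    ∫ Θ in (0:ℝ)..Real.pi,
      A * Real.sin Θ * (18 - (6 + c * (1 - Real.cos (2 * Θ)))) /
        ((6 + c * (1 - Real.cos (2 * Θ))) ^ 2 *
          Real.sqrt (6 + c * (1 - Real.cos (2 * Θ))))
      = 24 * A / (Real.sqrt 6 * (6 + 2 * c) ^ 2) := by
  have h62 : (0:ℝ) < 6 + 2 * c := by linarith
  set q : ℝ → ℝ := fun Θ => 6 + c * (1 - Real.cos (2 * Θ)) with hqdef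
  have hq1 : ∀ Θ, q Θ = 6 + 2 * c * Real.sin Θ ^ 2 := by
    intro Θ
    simp only [hqdef]
    have h1 : Real.cos (2 * Θ) = Real.cos Θ ^ 2 - Real.sin Θ ^ 2 := Real.cos_two_mul' Θ
    have h2 : Real.sin Θ ^ 2 + Real.cos Θ ^ 2 = 1 := Real.sin_sq_add_cos_sq Θ
    nlinarith
  have hqpos : ∀ Θ, 0 < q Θ := by
    intro Θ
    have hs : Real.sin Θ ^ 2 ≤ 1 := Real.sin_sq_le_one Θ
    have hs0 : 0 ≤ Real.sin Θ ^ 2 := sq_nonneg _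
    rw [hq1]
    nlinarith
  set G : ℝ → ℝ := fun Θ =>
    Real.cos Θ * (-6*A/(6+2*c) + A*(2*c-6)/(6+2*c)^2 * q Θ) /
      (q Θ * Real.sqrt (q Θ)) with hGdef
  have key : ∀ Θ ∈ Set.uIcc (0:ℝ) Real.pi,
      HasDerivAt G (A * Real.sin Θ * (18 - q Θ) / ((q Θ) ^ 2 * Real.sqrt (q Θ))) Θ := by
    intro Θ _
    have hq : HasDerivAt q (4 * c * Real.sin Θ * Real.cos Θ) Θ := by
      have h2 : HasDerivAt (fun Θ : ℝ => 2 * Θ) 2 Θ := by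
        simpa using (hasDerivAt_id Θ).const_mul 2
      have hcos : HasDerivAt (fun Θ : ℝ => Real.cos (2 * Θ)) (-Real.sin (2 * Θ) * 2) Θ :=
        (Real.hasDerivAt_cos (2 * Θ)).comp Θ h2
      have := ((hcos.const_sub 1).const_mul c).const_add 6
      refine this.congr_deriv ?_
      rw [Real.sin_two_mul]; ring
    have hW : HasDerivAt (fun Θ => Real.sqrt (q Θ))
        (4 * c * Real.sin Θ * Real.cos Θ / (2 * Real.sqrt (q Θ))) Θ :=
      hq.sqrt (hqpos Θ).ne'
    have hN : HasDerivAt (fun Θ =>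
        Real.cos Θ * (-6*A/(6+2*c) + A*(2*c-6)/(6+2*c)^2 * q Θ))
        (-Real.sin Θ * (-6*A/(6+2*c) + A*(2*c-6)/(6+2*c)^2 * q Θ) +
          Real.cos Θ * (A*(2*c-6)/(6+2*c)^2 * (4 * c * Real.sin Θ * Real.cos Θ))) Θ :=
      (Real.hasDerivAt_cos Θ).mul ((hq.const_mul (A*(2*c-6)/(6+2*c)^2)).const_add
        (-6*A/(6+2*c)))
    have hD : HasDerivAt (fun Θ => q Θ * Real.sqrt (q Θ))
        (4 * c * Real.sin Θ * Real.cos Θ * Real.sqrt (q Θ) +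
          q Θ * (4 * c * Real.sin Θ * Real.cos Θ / (2 * Real.sqrt (q Θ)))) Θ :=
      hq.mul hW
    have hD0 : q Θ * Real.sqrt (q Θ) ≠ 0 := by
      have h1 := hqpos Θ
      have h2 := Real.sqrt_pos.2 (hqpos Θ)
      positivity
    have hG := hN.div hD hD0
    have heq := core_id c A (Real.sin Θ) (Real.cos Θ) (Real.sqrt (q Θ)) (q Θ)
      (Real.sqrt_pos.2 (hqpos Θ)).ne' (hqpos Θ).ne' h62.ne'
      (Real.sin_sq_add_cos_sq Θ) (Real.sq_sqrt (hqpos Θ).le) (hq1 Θ)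
    rw [heq]
    exact hG
  have hcont : Continuous (fun Θ => A * Real.sin Θ * (18 - q Θ) / ((q Θ) ^ 2 * Real.sqrt (q Θ))) := by
    have hqc : Continuous q := by
      simp only [hqdef]; fun_prop
    apply Continuous.div
    · fun_prop
    · exact (hqc.pow 2).mul (hqc.sqrt)
    · intro x
      have h1 := hqpos x
      have h2 := Real.sqrt_pos.2 (hqpos x)
      positivity
  rw [intervalIntegral.integral_eq_sub_of_hasDerivAt key (hcont.intervalIntegrable _ _)]
  have hqpi : q Real.pi = 6 := by
    simp only [hqdef]
    rw [show (2:ℝ) * Real.pi = 2 * Real.pi by rfl, Real.cos_two_pi]; ring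
  have hq0 : q 0 = 6 := by
    simp only [hqdef]; norm_num
  simp only [hGdef, hqpi, hq0, Real.cos_pi, Real.cos_zero]
  have h6 : (0:ℝ) < Real.sqrt 6 := Real.sqrt_pos.2 (by norm_num)
  field_simp
  ring

/-- Hamiltonian mass of Kerr–anti-de Sitter (30IX13.9): for `Λ < 0` with
`Ξ = 1 + a²Λ/3 > 0` and `ℓ² = −3/Λ`,
`(1/(16πℓ²)) ∫∫ (−36√6 m (12 − a²Λ(1 − cos 2Θ)) / (Λ(6 + a²Λ(1 − cos 2Θ))^{5/2})) sin Θ dΘ dΦ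
  = 9m/(a²Λ + 3)² = m/Ξ²`. -/
theorem kerr_anti_de_sitter_mass (Λ m a : ℝ) (hΛ : Λ < 0)
    (hΞ : 0 < 1 + a ^ 2 * Λ / 3) :
    let ℓsq : ℝ := -3 / Λ
    (1 / (16 * Real.pi * ℓsq) *
        ∫ _ in (0 : ℝ)..(2 * Real.pi),
          ∫ Θ in (0 : ℝ)..Real.pi,
            (-(36 * Real.sqrt 6 * m * (12 - a ^ 2 * Λ * (1 - Real.cos (2 * Θ)))) /
                (Λ * (6 + a ^ 2 * Λ * (1 - Real.cos (2 * Θ))) ^ ((5 : ℝ) / 2))) *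
              Real.sin Θ
      = 9 * m / (a ^ 2 * Λ + 3) ^ 2) ∧
    9 * m / (a ^ 2 * Λ + 3) ^ 2 = m / (1 + a ^ 2 * Λ / 3) ^ 2 := by
  have hΛ0 : Λ ≠ 0 := hΛ.ne
  have hc3 : (0:ℝ) < 3 + a ^ 2 * Λ := by nlinarith
  have hc : a ^ 2 * Λ ≤ 0 := by nlinarith [sq_nonneg a]
  intro ℓsq
  constructor
  · -- the mass computation
    set c : ℝ := a ^ 2 * Λ with hcdef
    set A : ℝ := -(36 * Real.sqrt 6 * m) / Λ with hAdef
    have hbody : (fun Θ : ℝ =>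
        (-(36 * Real.sqrt 6 * m * (12 - c * (1 - Real.cos (2 * Θ)))) /
            (Λ * (6 + c * (1 - Real.cos (2 * Θ))) ^ ((5 : ℝ) / 2))) * Real.sin Θ)
        = fun Θ : ℝ =>
          A * Real.sin Θ * (18 - (6 + c * (1 - Real.cos (2 * Θ)))) /
            ((6 + c * (1 - Real.cos (2 * Θ))) ^ 2 *
              Real.sqrt (6 + c * (1 - Real.cos (2 * Θ)))) := by
      funext Θ
      set qv : ℝ := 6 + c * (1 - Real.cos (2 * Θ)) with hqv
      have hq1 : qv = 6 + 2 * c * Real.sin Θ ^ 2 := by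
        have h1 : Real.cos (2 * Θ) = Real.cos Θ ^ 2 - Real.sin Θ ^ 2 := Real.cos_two_mul' Θ
        have h2 : Real.sin Θ ^ 2 + Real.cos Θ ^ 2 = 1 := Real.sin_sq_add_cos_sq Θ
        rw [hqv]; nlinarith
      have hqpos : 0 < qv := by
        have hs : Real.sin Θ ^ 2 ≤ 1 := Real.sin_sq_le_one Θ
        have hs0 : 0 ≤ Real.sin Θ ^ 2 := sq_nonneg _
        rw [hq1]; nlinarith
      have hrpow : qv ^ ((5:ℝ)/2) = qv ^ 2 * Real.sqrt qv := by
        rw [show ((5:ℝ)/2) = ((2:ℕ):ℝ) + (1/2:ℝ) by norm_num,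
          Real.rpow_add hqpos, Real.rpow_natCast, Real.sqrt_eq_rpow]
      rw [hrpow, hAdef]
      have hW : (0:ℝ) < Real.sqrt qv := Real.sqrt_pos.2 hqpos
      field_simp
      ring
    rw [hbody, inner_int c A hc (by linarith), intervalIntegral.integral_const,
      smul_eq_mul]
    have hℓ : ℓsq = -3 / Λ := rfl
    rw [hℓ, hAdef]
    have h66 : Real.sqrt 6 * Real.sqrt 6 = 6 := Real.mul_self_sqrt (by norm_num)
    have h6pos : (0:ℝ) < Real.sqrt 6 := Real.sqrt_pos.2 (by norm_num)
    have hπ : Real.pi ≠ 0 := Real.pi_ne_zero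
    have h62 : (6:ℝ) + 2 * c ≠ 0 := by linarith
    have hc3' : c + 3 ≠ 0 := by linarith
    field_simp
    ring_nf
  · have h3 : (a ^ 2 * Λ + 3) ≠ 0 := by linarith
    have h1 : (1 + a ^ 2 * Λ / 3) ≠ 0 := hΞ.ne'
    field_simp
    ring
end
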